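/- arXiv:2503.07145 — 8 statements merged into one kernel-verified Lean document; each statement's English description precedes it below -/
import Mathlib

section
/- Let n ≥ 1 and x ∈ ℝ^n. There exists a generalized tournament matrix P = (p_{ij})_{1≤i≠j≤n} (entries in [0,1] with p_{ij}+p_{ji}=1 for i≠j) whose score satisfies ∑_{j≠i} p_{ij} = x_i for every i, if and only if x is majorized by (0,1,…,n−1), i.e. (after rearranging x in nondecreasing order x̃) ∑_{i=1}^n x̃_i = n(n−1)/2 and ∑_{i=1}^k x̃_i ≥ k(k−1)/2 for every k < n. -/
open Finset

/-- Gauss sum in `ℝ`. -/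
private lemma mgtGaussSum (k : ℕ) : ∑ j ∈ Finset.range k, (j : ℝ) = (k : ℝ) * ((k : ℝ) - 1) / 2 := by
  induction k with
  | zero => simp
  | succ m ih =>
    rw [Finset.sum_range_succ, ih]
    push_cast
    ring

private lemma clamp_nonneg (u : ℝ) : 0 ≤ min 1 (max 0 u) :=
  le_min zero_le_one (le_max_left _ _)

private lemma clamp_le_one (u : ℝ) : min 1 (max 0 u) ≤ 1 := min_le_left _ _

private lemma clamp_lip {a b : ℝ} (h : a ≤ b) :
    min 1 (max 0 b) - min 1 (max 0 a) ≤ b - a := by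
  have h1 : max 0 b ≤ max 0 a + (b - a) := by
    apply max_le
    · have := le_max_left (0:ℝ) a; linarith
    · have := le_max_right (0:ℝ) a; linarith
  rcases le_total 1 (max 0 a) with h2 | h2
  · have h3 : min 1 (max 0 a) = 1 := min_eq_left h2
    have h4 : min 1 (max 0 b) ≤ 1 := min_le_left _ _
    linarith
  · have h3 : min 1 (max 0 a) = max 0 a := min_eq_right h2
    have h4 : min 1 (max 0 b) ≤ max 0 b := min_le_right _ _
    linarith

/-- Double counting: for any `B`, the sum of `P i j` over ordered distinct pairs of `B` is
`|B| (|B|-1) / 2`. -/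
private lemma pairSum {n : ℕ} (P : Fin n → Fin n → ℝ)
    (hP : ∀ i j, i ≠ j → P i j + P j i = 1) (B : Finset (Fin n)) :
    ∑ i ∈ B, ∑ j ∈ B.erase i, P i j = (B.card : ℝ) * ((B.card : ℝ) - 1) / 2 := by
  classical
  set f : Fin n → Fin n → ℝ := fun i j => if i = j then 0 else P i j with hf
  have key : ∀ i ∈ B, ∑ j ∈ B.erase i, P i j = ∑ j ∈ B, f i j := by
    intro i hi
    rw [← Finset.add_sum_erase B (f i) hi]
    have h0 : f i i = 0 := by simp [hf]
    rw [h0, zero_add]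
    exact Finset.sum_congr rfl fun j hj => by
      simp [hf, (Finset.ne_of_mem_erase hj).symm]
  rw [Finset.sum_congr rfl key]
  set T : ℝ := ∑ i ∈ B, ∑ j ∈ B, f i j with hT
  have hcomm : T = ∑ i ∈ B, ∑ j ∈ B, f j i := Finset.sum_comm
  have h2 : T + T = ∑ i ∈ B, ∑ j ∈ B, (f i j + f j i) := by
    nth_rewrite 2 [hcomm]
    rw [hT, ← Finset.sum_add_distrib]
    exact Finset.sum_congr rfl fun i _ => (Finset.sum_add_distrib).symm
  have h3 : ∀ i ∈ B, ∑ j ∈ B, (f i j + f j i) = (B.card : ℝ) - 1 := by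
    intro i hi
    have : ∀ j, f i j + f j i = 1 - (if i = j then 1 else 0) := by
      intro j
      by_cases h : i = j
      · simp [hf, h]
      · simp [hf, h, Ne.symm h, hP i j h]
    rw [Finset.sum_congr rfl fun j _ => this j, Finset.sum_sub_distrib,
      Finset.sum_const, Finset.sum_ite_eq, if_pos hi]
    simp [mul_comm]
  rw [Finset.sum_congr rfl h3, Finset.sum_const, nsmul_eq_mul] at h2
  linarith

/-- Sum over the Fin-filter `(i : ℕ) < k` equals the range sum. -/
private lemma filter_lt_sum {n k : ℕ} (hk : k ≤ n) (g : ℕ → ℝ) :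
    ∑ i ∈ Finset.univ.filter (fun i : Fin n => (i : ℕ) < k), g (i : ℕ)
      = ∑ j ∈ Finset.range k, g j := by
  refine Finset.sum_bij' (i := fun (i : Fin n) _ => (i : ℕ))
    (j := fun j hj => (⟨j, lt_of_lt_of_le (Finset.mem_range.mp hj) hk⟩ : Fin n))
    (hi := ?_) (hj := ?_) (left_neg := ?_) (right_neg := ?_) (h := ?_)
  · intro a ha
    exact Finset.mem_range.mpr (Finset.mem_filter.mp ha).2
  · intro a ha
    simp [Finset.mem_range.mp ha]
  · intro a ha
    rfl
  · intro a ha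
    rfl
  · intro a ha
    rfl

/-- The inductive construction of a generalized tournament matrix from a sorted score
vector. -/
private lemma aux (n : ℕ) : ∀ (x : ℕ → ℝ),
    (∀ i j, i ≤ j → j < n → x i ≤ x j) →
    (∀ k, k ≤ n → (k : ℝ) * ((k : ℝ) - 1) / 2 ≤ ∑ j ∈ Finset.range k, x j) →
    (∑ j ∈ Finset.range n, x j = (n : ℝ) * ((n : ℝ) - 1) / 2) →
    ∃ P : Fin n → Fin n → ℝ,
      (∀ i j, i ≠ j → 0 ≤ P i j ∧ P i j ≤ 1 ∧ P i j + P j i = 1) ∧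
      (∀ i, ∑ j ∈ Finset.univ.filter (· ≠ i), P i j = x (i : ℕ)) := by
  induction n with
  | zero =>
    intro x _ _ _
    exact ⟨fun _ _ => 0, fun i => i.elim0, fun i => i.elim0⟩
  | succ n IH =>
    intro x hmono hpre hsum
    by_cases hn0 : n = 0
    · subst hn0
      refine ⟨fun _ _ => 0, ?_, ?_⟩
      · intro i j hij
        exact absurd (Fin.ext (by omega : (i : ℕ) = (j : ℕ))) hij
      · intro i
        have hx0 : x 0 = 0 := by
          have h := hsum
          rw [Finset.sum_range_one] at h
          norm_num at h
          exact h
        have hfe : Finset.univ.filter (· ≠ i) = (∅ : Finset (Fin 1)) := by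
          ext j
          have hji : j = i := Fin.ext (by omega)
          simp [hji]
        rw [hfe, Finset.sum_empty]
        have hiv : (i : ℕ) = 0 := by omega
        rw [hiv, hx0]
    · have hx0 : 0 ≤ x 0 := by
        have h := hpre 1 (by omega)
        rw [Finset.sum_range_one] at h
        norm_num at h
        exact h
      have hxnn : ∀ j, j < n + 1 → 0 ≤ x j := fun j hj =>
        le_trans hx0 (hmono 0 j (Nat.zero_le _) hj)
      set S : ℝ := ∑ j ∈ Finset.range n, x j with hS
      set E : ℝ := S - (n : ℝ) * ((n : ℝ) - 1) / 2 with hE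
      have htop : x n = (n : ℝ) - E := by
        have h := hsum
        rw [Finset.sum_range_succ, ← hS] at h
        push_cast at h
        have hr : ((n : ℝ) + 1) * ((n : ℝ) + 1 - 1) / 2
            = (n : ℝ) + (n : ℝ) * ((n : ℝ) - 1) / 2 := by ring
        rw [hE]
        linarith [hr ▸ h]
      have hE0 : 0 ≤ E := by
        have h := hpre n (by omega)
        rw [← hS] at h
        rw [hE]
        linarith
      have hEn : E ≤ (n : ℝ) := by
        have h := hxnn n (by omega)
        rw [htop] at h
        linarith
      set F : ℝ → ℝ := fun t => ∑ j ∈ Finset.range n, min 1 (max 0 (x j - t)) with hF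
      have hFcont : Continuous F := by
        apply continuous_finset_sum
        intro j _
        exact continuous_const.min (continuous_const.max (continuous_const.sub continuous_id))
      have hlo : F (-1) = (n : ℝ) := by
        rw [hF]
        simp only []
        have hone : ∀ j ∈ Finset.range n, min 1 (max 0 (x j - (-1))) = 1 := by
          intro j hj
          have h0 := hxnn j (by have := Finset.mem_range.mp hj; omega)
          exact min_eq_left (le_trans (by linarith) (le_max_right _ _))
        rw [Finset.sum_congr rfl hone, Finset.sum_const, Finset.card_range, nsmul_eq_mul, mul_one]
      have hhi : F (x n) = 0 := by
        rw [hF]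
        apply Finset.sum_eq_zero
        intro j hj
        have hle : x j ≤ x n := hmono j n (le_of_lt (Finset.mem_range.mp hj)) (by omega)
        rw [max_eq_left (by linarith)]
        exact min_eq_right zero_le_one
      have hm1 : (-1 : ℝ) ≤ x n := le_trans (by norm_num) (hxnn n (by omega))
      have hmem : E ∈ Set.Icc (F (x n)) (F (-1)) := by
        rw [hlo, hhi]
        exact ⟨hE0, hEn⟩
      obtain ⟨t, _, hFt⟩ := intermediate_value_Icc' hm1 hFcont.continuousOn hmem
      set q : ℕ → ℝ := fun j => min 1 (max 0 (x j - t)) with hq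
      have hq0 : ∀ j, 0 ≤ q j := fun j => clamp_nonneg _
      have hq1 : ∀ j, q j ≤ 1 := fun j => clamp_le_one _
      have hqE : ∑ j ∈ Finset.range n, q j = E := by
        simp only [hq]
        exact hFt
      -- core prefix inequality
      have hQ : ∀ k, k ≤ n → ∑ j ∈ Finset.range k, q j
          ≤ ∑ j ∈ Finset.range k, x j - (k : ℝ) * ((k : ℝ) - 1) / 2 := by
        intro k hk
        by_cases hcA : (k : ℝ) - 1 ≤ t
        · -- Case A
          have claimA : ∀ m, m ≤ n → (m : ℝ) - 1 ≤ t →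
              (m : ℝ) * ((m : ℝ) - 1) / 2 ≤ ∑ j ∈ Finset.range m, min (x j) t := by
            intro m
            induction m with
            | zero => intro _ _; simp
            | succ m ihm =>
              intro hm1 hm2
              rcases le_total (x m) t with hc | hc
              · have hall : ∀ j ∈ Finset.range (m + 1), min (x j) t = x j := by
                  intro j hj
                  have hjm : j ≤ m := by have := Finset.mem_range.mp hj; omega
                  exact min_eq_left (le_trans (hmono j m hjm (by omega)) hc)
                rw [Finset.sum_congr rfl hall]
                exact hpre (m + 1) (by omega)
              · rw [Finset.sum_range_succ, min_eq_right hc]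
                have hmt : (m : ℝ) ≤ t := by push_cast at hm2; linarith
                have h5 := ihm (by omega) (by push_cast; linarith)
                push_cast [Nat.cast_succ]
                nlinarith [h5, hmt]
          have hmaxmin : ∀ j : ℕ, max 0 (x j - t) = x j - min (x j) t := by
            intro j
            rcases le_total (x j) t with hc | hc
            · rw [max_eq_left (by linarith), min_eq_left hc]
              ring
            · rw [max_eq_right (by linarith), min_eq_right hc]
          have hqle : ∀ j : ℕ, q j ≤ x j - min (x j) t := by
            intro j
            simp only [hq]
            exact (min_le_right _ _).trans (le_of_eq (hmaxmin j))
          have h6 : ∑ j ∈ Finset.range k, q j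
              ≤ ∑ j ∈ Finset.range k, (x j - min (x j) t) :=
            Finset.sum_le_sum fun j _ => hqle j
          rw [Finset.sum_sub_distrib] at h6
          have h7 := claimA k hk hcA
          linarith
        · -- Case B
          push_neg at hcA
          have hzero : ∑ j ∈ Finset.range n, (q j - (x j - (j : ℝ))) = 0 := by
            rw [Finset.sum_sub_distrib, Finset.sum_sub_distrib, hqE, mgtGaussSum, ← hS, hE]
            ring
          have claimB : ∀ d, d ≤ n - k →
              0 ≤ ∑ j ∈ Finset.Ico (n - d) n, (q j - (x j - (j : ℝ))) := by
            intro d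
            induction d with
            | zero => intro _; simp
            | succ d ihd =>
              intro hd
              set m := n - (d + 1) with hm
              have hmk : k ≤ m := by omega
              have hmn : m < n := by omega
              have hnd : n - d = m + 1 := by omega
              have hsplit : ∑ j ∈ Finset.Ico m n, (q j - (x j - (j : ℝ)))
                  = (q m - (x m - (m : ℝ)))
                    + ∑ j ∈ Finset.Ico (m + 1) n, (q j - (x j - (j : ℝ))) :=
                Finset.sum_eq_sum_Ico_succ_bot hmn _
              have hIH := ihd (by omega)
              rw [hnd] at hIH
              rcases le_total (x m - (m : ℝ)) (q m) with hc | hc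
              · rw [hsplit]
                linarith
              · exfalso
                have hkm : (k : ℝ) ≤ (m : ℝ) := by exact_mod_cast hmk
                have htm : t < (m : ℝ) := by linarith
                have hq1m : q m = 1 := by
                  rcases le_total 1 (max 0 (x m - t)) with h1 | h1
                  · simp only [hq]
                    exact min_eq_left h1
                  · exfalso
                    have hqm : q m = max 0 (x m - t) := by
                      simp only [hq]
                      exact min_eq_right h1
                    have h2 : x m - t ≤ q m := by
                      rw [hqm]
                      exact le_max_right _ _
                    linarith
                have hxm : (m : ℝ) + 1 ≤ x m := by
                  rw [hq1m] at hc
                  linarith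
                have hqall : ∀ j ∈ Finset.Ico m n, q j = 1 := by
                  intro j hj
                  obtain ⟨hj1, hj2⟩ := Finset.mem_Ico.mp hj
                  have hxj : x m ≤ x j := hmono m j hj1 (by omega)
                  simp only [hq]
                  refine min_eq_left (le_trans ?_ (le_max_right _ _))
                  linarith
                have hEge : (n : ℝ) - (m : ℝ) ≤ E := by
                  rw [← hqE]
                  have hsplit2 : ∑ j ∈ Finset.range n, q j
                      = ∑ j ∈ Finset.range m, q j + ∑ j ∈ Finset.Ico m n, q j :=
                    (Finset.sum_range_add_sum_Ico q (le_of_lt hmn)).symm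
                  have h8 : (0 : ℝ) ≤ ∑ j ∈ Finset.range m, q j :=
                    Finset.sum_nonneg fun j _ => hq0 j
                  have h9 : ∑ j ∈ Finset.Ico m n, q j = ((n - m : ℕ) : ℝ) := by
                    rw [Finset.sum_congr rfl hqall, Finset.sum_const, Nat.card_Ico,
                      nsmul_eq_mul, mul_one]
                  rw [hsplit2, h9, Nat.cast_sub (le_of_lt hmn)]
                  linarith
                have hxn : x m ≤ x n := hmono m n (le_of_lt hmn) (by omega)
                rw [htop] at hxn
                linarith
          have hB := claimB (n - k) le_rfl
          have hnk : n - (n - k) = k := by omega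
          rw [hnk] at hB
          have hsplit3 : ∑ j ∈ Finset.range n, (q j - (x j - (j : ℝ)))
              = ∑ j ∈ Finset.range k, (q j - (x j - (j : ℝ)))
                + ∑ j ∈ Finset.Ico k n, (q j - (x j - (j : ℝ))) :=
            (Finset.sum_range_add_sum_Ico _ hk).symm
          have h10 : ∑ j ∈ Finset.range k, (q j - (x j - (j : ℝ))) ≤ 0 := by
            rw [hsplit3] at hzero
            linarith
          rw [Finset.sum_sub_distrib, Finset.sum_sub_distrib, mgtGaussSum] at h10
          linarith
      -- the reduced score vector
      set y : ℕ → ℝ := fun j => x j - q j with hy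
      have hymono : ∀ i j, i ≤ j → j < n → y i ≤ y j := by
        intro i j hij hj
        have h1 : x i ≤ x j := hmono i j hij (by omega)
        have h2 := clamp_lip (a := x i - t) (b := x j - t) (by linarith)
        simp only [hy, hq]
        linarith
      have hypre : ∀ k, k ≤ n → (k : ℝ) * ((k : ℝ) - 1) / 2 ≤ ∑ j ∈ Finset.range k, y j := by
        intro k hk
        have h1 := hQ k hk
        have h2 : ∑ j ∈ Finset.range k, y j
            = ∑ j ∈ Finset.range k, x j - ∑ j ∈ Finset.range k, q j := by
          simp only [hy]
          exact Finset.sum_sub_distrib _ _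
        linarith
      have hysum : ∑ j ∈ Finset.range n, y j = (n : ℝ) * ((n : ℝ) - 1) / 2 := by
        have h2 : ∑ j ∈ Finset.range n, y j
            = ∑ j ∈ Finset.range n, x j - ∑ j ∈ Finset.range n, q j := by
          simp only [hy]
          exact Finset.sum_sub_distrib _ _
        rw [h2, hqE, ← hS, hE]
        ring
      obtain ⟨P', hP'c, hP's⟩ := IH y hymono hypre hysum
      -- assemble the matrix
      set P : Fin (n + 1) → Fin (n + 1) → ℝ := fun i j =>
        if i = j then 0
        else if hi : (i : ℕ) < n then
          (if hj : (j : ℕ) < n then P' ⟨i, hi⟩ ⟨j, hj⟩ else q i)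
        else (if hj : (j : ℕ) < n then 1 - q j else 0) with hP
      refine ⟨P, ?_, ?_⟩
      · intro i j hij
        have hij' : (i : ℕ) ≠ (j : ℕ) := fun h => hij (Fin.ext h)
        by_cases hi : (i : ℕ) < n
        · by_cases hj : (j : ℕ) < n
          · have hne : (⟨(i : ℕ), hi⟩ : Fin n) ≠ ⟨(j : ℕ), hj⟩ := by
              intro h
              exact hij' (by simpa using h)
            obtain ⟨h1, h2, h3⟩ := hP'c _ _ hne
            simp only [hP, if_neg hij, if_neg (Ne.symm hij), dif_pos hi, dif_pos hj]
            exact ⟨h1, h2, h3⟩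
          · simp only [hP, if_neg hij, if_neg (Ne.symm hij), dif_pos hi, dif_neg hj]
            exact ⟨hq0 _, hq1 _, by ring⟩
        · by_cases hj : (j : ℕ) < n
          · simp only [hP, if_neg hij, if_neg (Ne.symm hij), dif_neg hi, dif_pos hj]
            refine ⟨by have := hq1 (j : ℕ); linarith, by have := hq0 (j : ℕ); linarith, by ring⟩
          · exfalso
            apply hij
            apply Fin.ext
            have h1 := i.isLt
            have h2 := j.isLt
            omega
      · intro i
        have hPii : P i i = 0 := by simp [hP]
        rw [Finset.filter_ne', Finset.sum_erase _ hPii, Fin.sum_univ_castSucc]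
        by_cases hi : (i : ℕ) < n
        · have hilast : i ≠ Fin.last n := by
            intro h
            rw [h] at hi
            simp at hi
          have hlastval : P i (Fin.last n) = q (i : ℕ) := by
            simp only [hP, if_neg hilast, dif_pos hi, Fin.val_last]
            rw [dif_neg (lt_irrefl n)]
          have hcastval : ∀ j : Fin n, P i (Fin.castSucc j)
              = (if (⟨(i : ℕ), hi⟩ : Fin n) = j then 0 else P' ⟨(i : ℕ), hi⟩ j) := by
            intro j
            by_cases hj : (⟨(i : ℕ), hi⟩ : Fin n) = j
            · have hcs : i = Fin.castSucc j := by
                apply Fin.ext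
                simpa using congrArg Fin.val hj
              rw [if_pos hj]
              simp [hP, hcs]
            · have hne : i ≠ Fin.castSucc j := by
                intro h
                apply hj
                apply Fin.ext
                simpa using congrArg Fin.val h
              rw [if_neg hj]
              simp only [hP, if_neg hne, dif_pos hi, Fin.coe_castSucc, dif_pos j.isLt]
          rw [hlastval, Finset.sum_congr rfl fun j _ => hcastval j]
          have hsum2 : ∑ j : Fin n, (if (⟨(i : ℕ), hi⟩ : Fin n) = j then 0 else P' ⟨(i : ℕ), hi⟩ j)
              = ∑ j ∈ Finset.univ.erase ⟨(i : ℕ), hi⟩, P' ⟨(i : ℕ), hi⟩ j := by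
            rw [← Finset.add_sum_erase _ _ (Finset.mem_univ (⟨(i : ℕ), hi⟩ : Fin n)),
              if_pos rfl, zero_add]
            exact Finset.sum_congr rfl fun j hj =>
              if_neg fun h => (Finset.ne_of_mem_erase hj) h.symm
          rw [hsum2, ← Finset.filter_ne', hP's]
          simp only [hy]
          ring
        · have hival : (i : ℕ) = n := by
            have := i.isLt
            omega
          have hilast : i = Fin.last n := Fin.ext (by simp [hival])
          have hlastval : P i (Fin.last n) = 0 := by simp [hP, hilast]
          have hcastval : ∀ j : Fin n, P i (Fin.castSucc j) = 1 - q (j : ℕ) := by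
            intro j
            have hne : i ≠ Fin.castSucc j := by
              intro h
              have h1 : (i : ℕ) = (j : ℕ) := by rw [h]; simp
              have := j.isLt
              omega
            simp only [hP, if_neg hne, dif_neg hi, Fin.coe_castSucc, dif_pos j.isLt]
          rw [hlastval, Finset.sum_congr rfl fun j _ => hcastval j, add_zero,
            Finset.sum_sub_distrib, Finset.sum_const, Finset.card_univ, Fintype.card_fin,
            nsmul_eq_mul, mul_one]
          have hqsum : ∑ j : Fin n, q (j : ℕ) = E := by
            rw [Fin.sum_univ_eq_sum_range]
            exact hqE
          rw [hqsum, hival, htop]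

/-- **Moon's theorem for generalized tournament matrices.**
A generalized tournament matrix with score `x` exists iff `x` is majorized by
`(0, 1, …, n-1)`. -/
theorem moon_generalized_tournament (n : ℕ) (hn : 1 ≤ n) (x : Fin n → ℝ) :
    (∃ P : Fin n → Fin n → ℝ,
      (∀ i j, i ≠ j → 0 ≤ P i j ∧ P i j ≤ 1 ∧ P i j + P j i = 1) ∧
      (∀ i, ∑ j ∈ Finset.univ.filter (· ≠ i), P i j = x i)) ↔
    ((∑ i, x i = (n * (n - 1) / 2 : ℝ)) ∧
      ∀ k : ℕ, k < n →
        (k * (k - 1) / 2 : ℝ) ≤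
          ∑ i ∈ Finset.univ.filter (fun i : Fin n => (i : ℕ) < k),
            x (Tuple.sort x i)) := by
  classical
  constructor
  · rintro ⟨P, hP, hscore⟩
    have hscore' : ∀ i, ∑ j ∈ Finset.univ.erase i, P i j = x i := by
      intro i
      rw [← Finset.filter_ne']
      exact hscore i
    have hPsum : ∀ i j, i ≠ j → P i j + P j i = 1 := fun i j h => (hP i j h).2.2
    constructor
    · have := pairSum P hPsum Finset.univ
      rw [Finset.sum_congr rfl fun i _ => (hscore' i)] at this
      rw [this, Finset.card_univ, Fintype.card_fin]
    · intro k hk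
      set σ := Tuple.sort x with hσ
      set B := (Finset.univ.filter (fun i : Fin n => (i : ℕ) < k)).image σ with hB
      have hinj : Function.Injective σ := σ.injective
      have h1 : ∑ i ∈ Finset.univ.filter (fun i : Fin n => (i : ℕ) < k), x (σ i)
          = ∑ b ∈ B, x b := (Finset.sum_image fun a _ b _ h => hinj h).symm
      have hcard : (B.card : ℝ) = k := by
        rw [hB, Finset.card_image_of_injective _ hinj]
        have := filter_lt_sum (n := n) (k := k) hk.le (fun _ => (1:ℝ))
        rw [Finset.sum_const, Finset.sum_const, Finset.card_range] at this
        simpa using this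
      rw [h1]
      have h2 := pairSum P hPsum B
      have h3 : ∑ i ∈ B, ∑ j ∈ B.erase i, P i j ≤ ∑ b ∈ B, x b := by
        apply Finset.sum_le_sum
        intro i hi
        rw [← hscore' i]
        apply Finset.sum_le_sum_of_subset_of_nonneg
        · exact Finset.erase_subset_erase _ (Finset.subset_univ B)
        · intro j hj _
          exact (hP i j (Finset.ne_of_mem_erase hj).symm).1
      rw [h2, hcard] at h3
      exact h3
  · rintro ⟨hsum, hpre⟩
    set σ := Tuple.sort x with hσ
    set X : ℕ → ℝ := fun j => if h : j < n then x (σ ⟨j, h⟩) else 0 with hX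
    have hXmono : ∀ i j, i ≤ j → j < n → X i ≤ X j := by
      intro i j hij hj
      have hi : i < n := lt_of_le_of_lt hij hj
      simp only [hX, dif_pos hj, dif_pos hi]
      exact Tuple.monotone_sort x (show (⟨i, hi⟩ : Fin n) ≤ ⟨j, hj⟩ from hij)
    have hXk : ∀ k, k ≤ n → ∑ j ∈ Finset.range k, X j
        = ∑ i ∈ Finset.univ.filter (fun i : Fin n => (i : ℕ) < k), x (σ i) := by
      intro k hk
      rw [← filter_lt_sum hk X]
      apply Finset.sum_congr rfl
      intro i _
      simp only [hX, dif_pos i.isLt]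
    have hXn : ∑ j ∈ Finset.range n, X j = (n : ℝ) * ((n : ℝ) - 1) / 2 := by
      rw [hXk n le_rfl]
      have hfil : Finset.univ.filter (fun i : Fin n => (i : ℕ) < n) = Finset.univ := by
        apply Finset.filter_true_of_mem
        intro i _
        exact i.isLt
      rw [hfil]
      rw [Equiv.sum_comp σ x]
      exact hsum
    have hXpre : ∀ k, k ≤ n → (k : ℝ) * ((k : ℝ) - 1) / 2 ≤ ∑ j ∈ Finset.range k, X j := by
      intro k hk
      rcases lt_or_eq_of_le hk with hk' | hk'
      · rw [hXk k hk]
        exact hpre k hk'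
      · subst hk'
        rw [hXn]
    obtain ⟨P', hP'c, hP's⟩ := aux n X hXmono hXpre hXn
    refine ⟨fun i j => P' (σ.symm i) (σ.symm j), ?_, ?_⟩
    · intro i j hij
      exact hP'c _ _ fun h => hij (by simpa using congrArg σ h)
    · intro i
      have hbij : ∑ j ∈ Finset.univ.filter (· ≠ i), P' (σ.symm i) (σ.symm j)
          = ∑ j' ∈ Finset.univ.filter (· ≠ σ.symm i), P' (σ.symm i) j' := by
        refine Finset.sum_bij' (i := fun j _ => σ.symm j) (j := fun j' _ => σ j')
          (hi := ?_) (hj := ?_) (left_neg := ?_) (right_neg := ?_) (h := ?_)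
        · intro a ha
          simp only [Finset.mem_filter, Finset.mem_univ, true_and] at ha ⊢
          exact fun h => ha (by simpa using congrArg σ h)
        · intro a ha
          simp only [Finset.mem_filter, Finset.mem_univ, true_and] at ha ⊢
          intro h
          apply ha
          rw [← h]
          simp
        · intro a _
          simp
        · intro a _
          simp
        · intro a _
          rfl
      rw [hbij, hP's]
      have : X ((σ.symm i) : ℕ) = x i := by
        simp only [hX, dif_pos (σ.symm i).isLt]
        rw [show (⟨((σ.symm i) : ℕ), (σ.symm i).isLt⟩ : Fin n) = σ.symm i from Fin.eta _ _]
        simp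
      exact this
end

section
/- Let n ≥ 1 and x ∈ ℝ^n. There exists a matrix P = (p_{ij})_{1≤i,j≤n} with entries in [0,1], p_{ii} = 1/2 for all i, p_{ij}+p_{ji}=1 for all i≠j, and ∑_{j=1}^n p_{ij} = x_i for every i, if and only if x is majorized by (1/2, 3/2, …, n−1/2), i.e. (after rearranging x nondecreasingly) ∑_{i=1}^n x̃_i = n²/2 and ∑_{i=1}^k x̃_i ≥ k²/2 for every k < n. -/
open Finset

private def Feas {ι : Type*} [Fintype ι] (z : ι → ℝ) : Prop :=
  ∃ P : ι → ι → ℝ,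
    (∀ i j, 0 ≤ P i j ∧ P i j ≤ 1) ∧
    (∀ i j, P i j + P j i = 1) ∧
    (∀ i, ∑ j, P i j = z i)

private lemma feas_relabel {ι κ : Type*} [Fintype ι] [Fintype κ] {z : ι → ℝ}
    (h : Feas z) (e : κ ≃ ι) : Feas (z ∘ e) := by
  obtain ⟨P, h01, hsym, hrow⟩ := h
  refine ⟨fun a b => P (e a) (e b), fun a b => h01 _ _, fun a b => hsym _ _, fun a => ?_⟩
  rw [Equiv.sum_comp e (P (e a))]
  exact hrow (e a)

private lemma feas_sum {ι κ : Type*} [Fintype ι] [Fintype κ] {u : ι → ℝ} {v : κ → ℝ}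
    (hu : Feas u) (hv : Feas v) :
    Feas (Sum.elim u (fun j => (Fintype.card ι : ℝ) + v j)) := by
  obtain ⟨P, hP01, hPsym, hProw⟩ := hu
  obtain ⟨Q, hQ01, hQsym, hQrow⟩ := hv
  refine ⟨fun a b => Sum.elim (fun i => Sum.elim (P i) (fun _ => 0) b)
      (fun j => Sum.elim (fun _ => 1) (Q j) b) a, ?_, ?_, ?_⟩
  · rintro (i | j) (i' | j') <;> simp [hP01, hQ01]
  · rintro (i | j) (i' | j') <;> simp [hPsym, hQsym]
  · rintro (i | j) <;>
      simp [Fintype.sum_sum_type, hProw, hQrow, add_comm]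

private noncomputable def Spart {n : ℕ} (z : Fin n → ℝ) (k : ℕ) : ℝ :=
  ∑ i ∈ Finset.univ.filter (fun i : Fin n => (i : ℕ) < k), z i

private lemma Spart_zero {n : ℕ} (z : Fin n → ℝ) : Spart z 0 = 0 := by
  simp [Spart]

private lemma Spart_top {n : ℕ} (z : Fin n → ℝ) {k : ℕ} (hk : n ≤ k) :
    Spart z k = ∑ i, z i := by
  unfold Spart
  congr 1
  ext i
  simp [lt_of_lt_of_le i.is_lt hk]

private lemma Spart_succ {n : ℕ} (z : Fin n → ℝ) {k : ℕ} (hk : k < n) :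
    Spart z (k + 1) = Spart z k + z ⟨k, hk⟩ := by
  unfold Spart
  have : Finset.univ.filter (fun i : Fin n => (i : ℕ) < k + 1)
      = insert ⟨k, hk⟩ (Finset.univ.filter (fun i : Fin n => (i : ℕ) < k)) := by
    ext i
    simp only [mem_filter, mem_insert, mem_univ, true_and, Fin.ext_iff]
    omega
  rw [this, Finset.sum_insert (by simp)]
  ring

private lemma card_filter_lt {n k : ℕ} (hk : k ≤ n) :
    (Finset.univ.filter (fun i : Fin n => (i : ℕ) < k)).card = k := by
  induction k with
  | zero => simp
  | succ m ih =>
      have hm : m < n := hk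
      have : Finset.univ.filter (fun i : Fin n => (i : ℕ) < m + 1)
          = insert ⟨m, hm⟩ (Finset.univ.filter (fun i : Fin n => (i : ℕ) < m)) := by
        ext i
        simp only [mem_filter, mem_insert, mem_univ, true_and, Fin.ext_iff]
        omega
      rw [this, Finset.card_insert_of_notMem (by simp), ih (le_of_lt hm)]

private lemma Spart_slope {n : ℕ} {z : Fin n → ℝ} (hz : Monotone z) {k : ℕ} (hk : k < n) :
    ((n : ℝ) - k) * Spart z k ≤ k * (Spart z n - Spart z k) := by
  have h1 : Spart z k ≤ k * z ⟨k, hk⟩ := by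
    calc Spart z k ≤ ∑ _i ∈ Finset.univ.filter (fun i : Fin n => (i : ℕ) < k), z ⟨k, hk⟩ := by
          apply Finset.sum_le_sum
          intro i hi
          exact hz (by simp only [mem_filter] at hi; exact le_of_lt (by exact_mod_cast hi.2))
      _ = k * z ⟨k, hk⟩ := by
          rw [Finset.sum_const, card_filter_lt (le_of_lt hk)]; simp
  have h2 : ((n : ℝ) - k) * z ⟨k, hk⟩ ≤ Spart z n - Spart z k := by
    have : Spart z n - Spart z k
        = ∑ i ∈ Finset.univ.filter (fun i : Fin n => ¬ ((i : ℕ) < k)), z i := by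
      rw [Spart_top z le_rfl]
      unfold Spart
      rw [← Finset.sum_filter_add_sum_filter_not Finset.univ (fun i : Fin n => (i : ℕ) < k) z]
      ring
    rw [this]
    have hcard : (Finset.univ.filter (fun i : Fin n => ¬ ((i : ℕ) < k))).card = n - k := by
      have := Finset.card_filter_add_card_filter_not (s := (Finset.univ : Finset (Fin n)))
        (p := fun i : Fin n => (i : ℕ) < k)
      rw [card_filter_lt (le_of_lt hk), Finset.card_univ, Fintype.card_fin] at this
      omega
    calc ((n : ℝ) - k) * z ⟨k, hk⟩
        = ∑ _i ∈ Finset.univ.filter (fun i : Fin n => ¬ ((i : ℕ) < k)), z ⟨k, hk⟩ := by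
          rw [Finset.sum_const, hcard, nsmul_eq_mul, Nat.cast_sub (le_of_lt hk)]
      _ ≤ ∑ i ∈ Finset.univ.filter (fun i : Fin n => ¬ ((i : ℕ) < k)), z i := by
          apply Finset.sum_le_sum
          intro i hi
          simp only [mem_filter, not_lt] at hi
          exact hz (by exact_mod_cast hi.2)
  nlinarith [h1, h2, sub_nonneg.mpr (le_of_lt (show (k:ℝ) < n by exact_mod_cast hk)),
    (show (0:ℝ) ≤ k by positivity)]

private lemma feas_convex {n : ℕ} {w : Fin n → ℝ} (hw : Feas w) {l : ℝ}
    (h0 : 0 ≤ l) (h1 : l ≤ 1) :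
    Feas (fun i : Fin n => l * ((n : ℝ) / 2) + (1 - l) * w i) := by
  obtain ⟨Q, hQ01, hQsym, hQrow⟩ := hw
  refine ⟨fun i j => l * (1 / 2) + (1 - l) * Q i j, ?_, ?_, ?_⟩
  · intro i j
    obtain ⟨ha, hb⟩ := hQ01 i j
    constructor <;> nlinarith
  · intro i j
    linear_combination (1 - l) * hQsym i j
  · intro i
    rw [Finset.sum_add_distrib, Finset.sum_const, ← Finset.mul_sum, hQrow,
      Finset.card_univ, Fintype.card_fin, nsmul_eq_mul]
    ring

private lemma spart_restrict {n k : ℕ} (w : Fin n → ℝ) (hk : k ≤ n) :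
    ∀ m, m ≤ k → Spart (fun i : Fin k => w ⟨i.1, lt_of_lt_of_le i.2 hk⟩) m = Spart w m := by
  intro m
  induction m with
  | zero => intro _; rw [Spart_zero, Spart_zero]
  | succ p ih =>
      intro hp
      have hp' : p < k := hp
      rw [Spart_succ _ hp', Spart_succ w (lt_of_lt_of_le hp' hk), ih (le_of_lt hp')]

private lemma spart_shift {n k : ℕ} (w : Fin n → ℝ) (c : ℝ) (hk : k ≤ n) :
    ∀ m, m ≤ n - k →
      Spart (fun j : Fin (n - k) => w ⟨k + j.1, by omega⟩ - c) m
        = Spart w (k + m) - Spart w k - m * c := by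
  intro m
  induction m with
  | zero => intro _; rw [Spart_zero]; simp
  | succ p ih =>
      intro hp
      have hp' : p < n - k := hp
      have hkp : k + p < n := by omega
      rw [Spart_succ _ hp', ih (le_of_lt hp'),
        show k + (p + 1) = (k + p) + 1 by ring, Spart_succ w hkp]
      push_cast
      ring
private lemma feas_main : ∀ n : ℕ, ∀ z : Fin n → ℝ, Monotone z →
    (∀ k : ℕ, k < n → ((k : ℝ) ^ 2 / 2) ≤ Spart z k) →
    Spart z n = ((n : ℝ) ^ 2 / 2) → Feas z := by
  intro n
  induction n using Nat.strong_induction_on with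
  | _ n IH =>
  intro z hz hpart htot
  by_cases hconst : ∀ i : Fin n, z i = (n : ℝ) / 2
  · refine ⟨fun _ _ => 1 / 2, fun _ _ => by norm_num, fun _ _ => by norm_num, fun i => ?_⟩
    rw [Finset.sum_const, Finset.card_univ, Fintype.card_fin, nsmul_eq_mul, hconst i]
    ring
  push_neg at hconst
  obtain ⟨i0, hi0⟩ := hconst
  have hn2 : 2 ≤ n := by
    rcases Nat.lt_or_ge n 2 with h | h
    · interval_cases n
      · exact absurd i0.2 (by omega)
      · exfalso
        apply hi0
        have h1 := Spart_succ z (show 0 < 1 by norm_num)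
        rw [Spart_zero] at h1
        have h2 : z ⟨0, by norm_num⟩ = 1 / 2 := by
          have := htot
          rw [h1] at this
          norm_num at this
          linarith
        have hi00 : i0 = ⟨0, by norm_num⟩ := Subsingleton.elim _ _
        rw [hi00, h2]
        norm_num
    · exact h
  have hTpos : ∀ k : ℕ, 0 < k → k < n → (0 : ℝ) < (k : ℝ) * ((n : ℝ) - k) / 2 := by
    intro k h1 h2
    have hk : (0:ℝ) < k := by exact_mod_cast h1
    have hkn : (k : ℝ) < n := by exact_mod_cast h2
    nlinarith [mul_pos hk (show (0:ℝ) < (n:ℝ) - k by linarith)]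
  have ht0 : ∀ k : ℕ, k < n → 0 ≤ Spart z k - (k:ℝ)^2/2 := fun k hk => by
    linarith [hpart k hk]
  have htT : ∀ k : ℕ, 0 < k → k < n → Spart z k - (k:ℝ)^2/2 ≤ (k:ℝ)*((n:ℝ)-k)/2 := by
    intro k h1 h2
    have hs := Spart_slope hz h2
    rw [htot] at hs
    have hk : (0:ℝ) < k := by exact_mod_cast h1
    have hkn : (k:ℝ) < n := by exact_mod_cast h2
    have hn0 : (0:ℝ) < n := by linarith
    nlinarith [hs, hn0]
  obtain ⟨k0, hk0mem, hk0min⟩ := Finset.exists_min_image (Finset.Ioo 0 n)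
    (fun k => (Spart z k - (k:ℝ)^2/2) / ((k:ℝ)*((n:ℝ)-k)/2))
    ⟨1, by rw [Finset.mem_Ioo]; omega⟩
  rw [Finset.mem_Ioo] at hk0mem
  obtain ⟨hk0pos, hk0n⟩ := hk0mem
  set l : ℝ := (Spart z k0 - (k0:ℝ)^2/2) / ((k0:ℝ)*((n:ℝ)-k0)/2) with hldef
  clear_value l
  have hT0 := hTpos k0 hk0pos hk0n
  have hl0 : 0 ≤ l := by rw [hldef]; exact div_nonneg (ht0 k0 hk0n) hT0.le
  have hl1 : l ≤ 1 := by rw [hldef]; exact (div_le_one hT0).mpr (htT k0 hk0pos hk0n)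
  have hlT : ∀ k : ℕ, 0 < k → k < n →
      l * ((k:ℝ)*((n:ℝ)-k)/2) ≤ Spart z k - (k:ℝ)^2/2 := by
    intro k h1 h2
    have hmin := hk0min k (Finset.mem_Ioo.mpr ⟨h1, h2⟩)
    have hTk := hTpos k h1 h2
    calc l * ((k:ℝ)*((n:ℝ)-k)/2)
        ≤ ((Spart z k - (k:ℝ)^2/2) / ((k:ℝ)*((n:ℝ)-k)/2)) * ((k:ℝ)*((n:ℝ)-k)/2) := by
          apply mul_le_mul_of_nonneg_right hmin hTk.le
      _ = Spart z k - (k:ℝ)^2/2 := div_mul_cancel₀ _ hTk.ne'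
  have hleq : l * ((k0:ℝ)*((n:ℝ)-k0)/2) = Spart z k0 - (k0:ℝ)^2/2 := by
    rw [hldef]; exact div_mul_cancel₀ _ hT0.ne'
  have hlne1 : l ≠ 1 := by
    intro h
    have hS : ∀ m : ℕ, m ≤ n → Spart z m = (m:ℝ) * n / 2 := by
      intro m hm
      rcases Nat.eq_zero_or_pos m with rfl | hm0
      · rw [Spart_zero]; simp
      rcases eq_or_lt_of_le hm with rfl | hmn
      · rw [htot]; ring
      have h1 := hlT m hm0 hmn
      rw [h, one_mul] at h1
      have h2 := htT m hm0 hmn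
      have h3 : Spart z m - (m:ℝ)^2/2 = (m:ℝ)*((n:ℝ)-m)/2 := le_antisymm h2 h1
      linear_combination h3
    apply hi0
    have h1 := Spart_succ z i0.2
    have e1 := hS i0.1 (le_of_lt i0.2)
    have e2 := hS (i0.1+1) i0.2
    rw [e1] at h1
    have hi : (⟨i0.1, i0.2⟩ : Fin n) = i0 := rfl
    rw [hi] at h1
    rw [h1] at e2
    push_cast at e2
    linarith
  have hl1' : l < 1 := lt_of_le_of_ne hl1 hlne1
  have h1l : (0:ℝ) < 1 - l := by linarith
  set w : Fin n → ℝ := fun i => (z i - l * ((n:ℝ)/2)) / (1 - l) with hwdef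
  have hzw : z = fun i => l * ((n:ℝ)/2) + (1-l) * w i := by
    funext i
    rw [hwdef]
    field_simp
    ring
  have hwmono : Monotone w := by
    intro a b hab
    have := hz hab
    show (z a - l * ((n:ℝ)/2)) / (1 - l) ≤ (z b - l * ((n:ℝ)/2)) / (1 - l)
    apply (div_le_div_iff_of_pos_right h1l).mpr
    linarith
  have hSw : ∀ m : ℕ, m ≤ n → Spart w m = (Spart z m - l * ((n:ℝ)/2) * m) / (1 - l) := by
    intro m hm
    unfold Spart
    rw [← Finset.sum_div]
    congr 1
    rw [Finset.sum_sub_distrib, Finset.sum_const, card_filter_lt hm, nsmul_eq_mul]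
    ring
  have hwpart : ∀ k : ℕ, k < n → ((k:ℝ)^2/2) ≤ Spart w k := by
    intro k hk
    rcases Nat.eq_zero_or_pos k with rfl | hkpos
    · rw [Spart_zero]; norm_num
    rw [hSw k (le_of_lt hk), le_div_iff₀ h1l]
    have := hlT k hkpos hk
    nlinarith [this]
  have hwtot : Spart w n = (n:ℝ)^2/2 := by
    rw [hSw n le_rfl, htot]
    field_simp
  have hwtight : Spart w k0 = (k0:ℝ)^2/2 := by
    rw [hSw k0 hk0n.le, div_eq_iff h1l.ne']
    linear_combination -hleq
  have hk0le : k0 ≤ n := hk0n.le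
  have hfu : Feas (fun i : Fin k0 => w ⟨i.1, lt_of_lt_of_le i.2 hk0le⟩) := by
    apply IH k0 hk0n
    · intro a b hab
      exact hwmono (Fin.mk_le_mk.mpr hab)
    · intro m hm
      rw [spart_restrict w hk0le m (le_of_lt hm)]
      exact hwpart m (lt_trans hm hk0n)
    · rw [spart_restrict w hk0le k0 le_rfl]
      exact hwtight
  have hfv : Feas (fun j : Fin (n - k0) => w ⟨k0 + j.1, by omega⟩ - (k0:ℝ)) := by
    apply IH (n - k0) (by omega)
    · intro a b hab
      have h2 := hwmono (show (⟨k0 + a.1, by omega⟩ : Fin n) ≤ ⟨k0 + b.1, by omega⟩ from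
        Fin.mk_le_mk.mpr (by have := Fin.le_def.mp hab; omega))
      dsimp
      linarith
    · intro m hm
      rw [spart_shift w (k0:ℝ) hk0le m (le_of_lt hm), hwtight]
      have h1 := hwpart (k0 + m) (by omega)
      push_cast at h1 ⊢
      nlinarith [h1]
    · rw [spart_shift w (k0:ℝ) hk0le (n - k0) le_rfl, hwtight,
        show k0 + (n - k0) = n from by omega, hwtot]
      push_cast [Nat.cast_sub hk0le]
      ring
  have hcombined := feas_sum hfu hfv
  rw [Fintype.card_fin] at hcombined
  have hcast : k0 + (n - k0) = n := by omega
  set e : Fin k0 ⊕ Fin (n - k0) ≃ Fin n := finSumFinEquiv.trans (finCongr hcast) with hedef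
  have hWE : (Sum.elim (fun i : Fin k0 => w ⟨i.1, lt_of_lt_of_le i.2 hk0le⟩)
      (fun j : Fin (n - k0) => (k0:ℝ) +
        ((fun j : Fin (n - k0) => w ⟨k0 + j.1, by omega⟩ - (k0:ℝ)) j))) = w ∘ e := by
    funext s
    rcases s with i | j
    · have hval : (e (Sum.inl i)).1 = i.1 := by
        simp [hedef, finSumFinEquiv_apply_left]
      simp only [Sum.elim_inl, Function.comp_apply]
      exact congrArg w (Fin.ext hval.symm)
    · have hval : (e (Sum.inr j)).1 = k0 + j.1 := by
        simp [hedef, finSumFinEquiv_apply_right]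
      simp only [Sum.elim_inr, Function.comp_apply]
      have : w (e (Sum.inr j)) = w ⟨k0 + j.1, by omega⟩ := congrArg w (Fin.ext hval)
      rw [this]
      ring
  rw [hWE] at hcombined
  have hfinal := feas_relabel hcombined e.symm
  have : (w ∘ e) ∘ e.symm = w := by
    funext i
    simp
  rw [this] at hfinal
  rw [hzw]
  exact feas_convex hfinal hl0 hl1
private lemma feas_total {n : ℕ} {x : Fin n → ℝ} (h : Feas x) :
    ∑ i, x i = (n : ℝ) ^ 2 / 2 := by
  obtain ⟨P, h01, hsym, hrow⟩ := h
  have hc : (∑ i, ∑ j, P i j) = ∑ i : Fin n, ∑ j : Fin n, P j i := Finset.sum_comm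
  have h2 : (∑ i, ∑ j, P i j) + (∑ i : Fin n, ∑ j : Fin n, P j i) = (n : ℝ) ^ 2 := by
    calc (∑ i, ∑ j, P i j) + (∑ i : Fin n, ∑ j : Fin n, P j i)
        = ∑ i : Fin n, ∑ j : Fin n, (P i j + P j i) := by
          rw [← Finset.sum_add_distrib]
          exact Finset.sum_congr rfl fun i _ => by rw [← Finset.sum_add_distrib]
      _ = ∑ _i : Fin n, ∑ _j : Fin n, (1 : ℝ) :=
          Finset.sum_congr rfl fun i _ => Finset.sum_congr rfl fun j _ => hsym i j
      _ = (n : ℝ) ^ 2 := by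
          simp [Finset.sum_const, Finset.card_univ]
          ring
  have h3 : ∑ i, x i = ∑ i, ∑ j, P i j :=
    Finset.sum_congr rfl fun i _ => (hrow i).symm
  linarith

private lemma feas_subset_bound {n : ℕ} {x : Fin n → ℝ} (h : Feas x) (S : Finset (Fin n)) :
    ((S.card : ℝ) ^ 2 / 2) ≤ ∑ i ∈ S, x i := by
  obtain ⟨P, h01, hsym, hrow⟩ := h
  have h1 : ∑ i ∈ S, ∑ j ∈ S, P i j ≤ ∑ i ∈ S, x i := by
    apply Finset.sum_le_sum
    intro i _
    rw [← hrow i]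
    exact Finset.sum_le_sum_of_subset_of_nonneg (Finset.subset_univ S)
      (fun j _ _ => (h01 i j).1)
  have hc : (∑ i ∈ S, ∑ j ∈ S, P i j) = ∑ i ∈ S, ∑ j ∈ S, P j i := Finset.sum_comm
  have h2 : (∑ i ∈ S, ∑ j ∈ S, P i j) + (∑ i ∈ S, ∑ j ∈ S, P j i) = (S.card : ℝ) ^ 2 := by
    calc (∑ i ∈ S, ∑ j ∈ S, P i j) + (∑ i ∈ S, ∑ j ∈ S, P j i)
        = ∑ i ∈ S, ∑ j ∈ S, (P i j + P j i) := by
          rw [← Finset.sum_add_distrib]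
          exact Finset.sum_congr rfl fun i _ => by rw [← Finset.sum_add_distrib]
      _ = ∑ _i ∈ S, ∑ _j ∈ S, (1 : ℝ) :=
          Finset.sum_congr rfl fun i _ => Finset.sum_congr rfl fun j _ => hsym i j
      _ = (S.card : ℝ) ^ 2 := by
          simp [Finset.sum_const]
          ring
  linarith

/-- **Moon's theorem, second form.** A matrix `P` with entries in `[0,1]`,
`p_{ii} = 1/2`, `p_{ij} + p_{ji} = 1`, and row sums `x_i` exists iff `x` is
majorized by `(1/2, 3/2, …, n - 1/2)`. -/
theorem moon_generalized_tournament_diag (n : ℕ) (hn : 1 ≤ n) (x : Fin n → ℝ) :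
    (∃ P : Fin n → Fin n → ℝ,
      (∀ i j, 0 ≤ P i j ∧ P i j ≤ 1) ∧
      (∀ i, P i i = 1 / 2) ∧
      (∀ i j, i ≠ j → P i j + P j i = 1) ∧
      (∀ i, ∑ j, P i j = x i)) ↔
    ((∑ i, x i = (n ^ 2 / 2 : ℝ)) ∧
      ∀ k : ℕ, k < n →
        (k ^ 2 / 2 : ℝ) ≤
          ∑ i ∈ Finset.univ.filter (fun i : Fin n => (i : ℕ) < k),
            x (Tuple.sort x i)) := by
  constructor
  · rintro ⟨P, h01, hdiag, hsym, hrow⟩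
    have hfeas : Feas x := by
      refine ⟨P, h01, fun i j => ?_, hrow⟩
      by_cases h : i = j
      · subst h; rw [hdiag]; norm_num
      · exact hsym i j h
    constructor
    · have := feas_total hfeas
      push_cast at this ⊢
      linarith
    · intro k hk
      have hinj : ∀ a ∈ Finset.univ.filter (fun i : Fin n => (i : ℕ) < k),
          ∀ b ∈ Finset.univ.filter (fun i : Fin n => (i : ℕ) < k),
          Tuple.sort x a = Tuple.sort x b → a = b :=
        fun a _ b _ hab => (Tuple.sort x).injective hab
      have himg : ∑ j ∈ (Finset.univ.filter (fun i : Fin n => (i : ℕ) < k)).image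
            (Tuple.sort x), x j
          = ∑ i ∈ Finset.univ.filter (fun i : Fin n => (i : ℕ) < k), x (Tuple.sort x i) :=
        Finset.sum_image hinj
      have hcard : ((Finset.univ.filter (fun i : Fin n => (i : ℕ) < k)).image
          (Tuple.sort x)).card = k := by
        rw [Finset.card_image_of_injective _ (Tuple.sort x).injective,
          card_filter_lt hk.le]
      have hb := feas_subset_bound hfeas
        ((Finset.univ.filter (fun i : Fin n => (i : ℕ) < k)).image (Tuple.sort x))
      rw [hcard, himg] at hb
      push_cast at hb ⊢
      linarith
  · rintro ⟨htot, hpart⟩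
    have hz : Monotone (x ∘ Tuple.sort x) := Tuple.monotone_sort x
    have hp : ∀ k : ℕ, k < n → ((k : ℝ) ^ 2 / 2) ≤ Spart (x ∘ Tuple.sort x) k := by
      intro k hk
      have := hpart k hk
      push_cast at this ⊢
      exact this
    have ht : Spart (x ∘ Tuple.sort x) n = ((n : ℝ) ^ 2 / 2) := by
      rw [Spart_top _ le_rfl]
      have he : ∑ i, (x ∘ Tuple.sort x) i = ∑ i, x i := Equiv.sum_comp (Tuple.sort x) x
      rw [he]
      push_cast at htot ⊢
      linarith
    have hf := feas_main n (x ∘ Tuple.sort x) hz hp ht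
    have hf2 := feas_relabel hf (Tuple.sort x).symm
    have hxx : (x ∘ Tuple.sort x) ∘ (Tuple.sort x).symm = x := by
      funext i
      simp
    rw [hxx] at hf2
    obtain ⟨P, h01, hsym, hrow⟩ := hf2
    exact ⟨P, h01, fun i => by have := hsym i i; linarith,
      fun i j _ => hsym i j, hrow⟩
end

section
/- Let x, y ∈ ℝ^n both have nondecreasing coordinates. Then x is majorized by y if and only if there exists a doubly stochastic n×n real matrix M = (m_{ij}) (nonnegative entries, every row and every column summing to 1) such that ∑_{j=1}^n m_{ij} y_j = x_i for every i. -/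
open Finset

namespace HLPaux
variable {n : ℕ}

/-- partial sum of the first `k` coordinates -/
noncomputable def S (f : Fin n → ℝ) (k : ℕ) : ℝ :=
  ∑ i ∈ Finset.univ.filter (fun i : Fin n => (i : ℕ) < k), f i

lemma S_of_le (f : Fin n → ℝ) {k : ℕ} (h : n ≤ k) : S f k = ∑ i, f i := by
  unfold S
  congr 1
  ext i
  simp only [mem_filter, mem_univ, true_and, iff_true]
  exact lt_of_lt_of_le i.isLt h

lemma filter_succ {k : ℕ} (hk : k < n) :
    Finset.univ.filter (fun i : Fin n => (i : ℕ) < k + 1) =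
      insert (⟨k, hk⟩ : Fin n) (Finset.univ.filter (fun i : Fin n => (i : ℕ) < k)) := by
  ext i
  simp only [mem_filter, mem_univ, true_and, mem_insert, Fin.ext_iff]
  omega

lemma S_succ (f : Fin n → ℝ) {k : ℕ} (hk : k < n) :
    S f (k + 1) = S f k + f ⟨k, hk⟩ := by
  unfold S
  rw [filter_succ hk, Finset.sum_insert (by simp)]
  ring

lemma card_filter_lt {k : ℕ} (hk : k < n) :
    (Finset.univ.filter (fun i : Fin n => (i : ℕ) < k)).card = k := by
  have : Finset.univ.filter (fun i : Fin n => (i : ℕ) < k) = Finset.Iio (⟨k, hk⟩ : Fin n) := by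
    ext i; simp [Fin.lt_iff_val_lt_val]
  rw [this, Fin.card_Iio]

end HLPaux

namespace HLPaux

lemma exists_DS :
    ∀ (d : ℕ) (x y : Fin n → ℝ), Monotone x → Monotone y →
      (∑ i, x i = ∑ i, y i) → (∀ k, S y k ≤ S x k) →
      (Finset.univ.filter (fun i => x i ≠ y i)).card ≤ d →
      ∃ M ∈ doublyStochastic ℝ (Fin n), ∀ i, ∑ j, M i j * y j = x i := by
  intro d
  induction d with
  | zero =>
    intro x y hx hy hsum hmaj hcard
    have hxy : x = y := by
      funext i
      by_contra h
      have : i ∈ Finset.univ.filter (fun i => x i ≠ y i) := by simp [h]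
      have := Finset.card_pos.2 ⟨i, this⟩
      omega
    subst hxy
    refine ⟨1, one_mem _, fun i => ?_⟩
    simp [Matrix.one_apply, Finset.sum_ite_eq]
  | succ d ih =>
    intro x y hx hy hsum hmaj hcard
    by_cases hne : (Finset.univ.filter (fun i => x i ≠ y i)).Nonempty
    case neg =>
      exact ih x y hx hy hsum hmaj (by simp [Finset.not_nonempty_iff_eq_empty.1 hne])
    -- there is an index where x < y
    have hjset : (Finset.univ.filter (fun i => x i < y i)).Nonempty := by
      by_contra h
      rw [Finset.not_nonempty_iff_eq_empty, Finset.filter_eq_empty_iff] at h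
      obtain ⟨i0, hi0⟩ := hne
      simp only [mem_filter, mem_univ, true_and] at hi0
      have hlt : ∀ i : Fin n, y i ≤ x i := fun i => not_lt.1 (h (mem_univ i))
      have : ∑ i, y i < ∑ i, x i :=
        Finset.sum_lt_sum (fun i _ => hlt i) ⟨i0, mem_univ i0, lt_of_le_of_ne (hlt i0) (Ne.symm hi0)⟩
      linarith [hsum]
    set j' := (Finset.univ.filter (fun i => x i < y i)).min' hjset with hj'def
    have hj'mem : x j' < y j' := by
      have := (Finset.univ.filter (fun i => x i < y i)).min'_mem hjset
      simpa using this
    have hj'min : ∀ i : Fin n, i < j' → y i ≤ x i := by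
      intro i hi
      by_contra h
      have : j' ≤ i := Finset.min'_le _ _ (by simp [not_le.1 h])
      exact absurd hi (not_lt.2 this)
    -- there is an index k' < j' where y < x
    have hkset : (Finset.univ.filter (fun i : Fin n => i < j' ∧ y i < x i)).Nonempty := by
      by_contra h
      rw [Finset.not_nonempty_iff_eq_empty, Finset.filter_eq_empty_iff] at h
      have heq : ∀ i : Fin n, i < j' → x i = y i := by
        intro i hi
        have h1 := hj'min i hi
        have h2 : ¬ (y i < x i) := fun hc => h (mem_univ i) ⟨hi, hc⟩
        linarith [not_lt.1 h2]
      have hSeq : S x (j' : ℕ) = S y (j' : ℕ) := by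
        unfold S
        apply Finset.sum_congr rfl
        intro i hi
        simp only [mem_filter, mem_univ, true_and] at hi
        exact heq i (Fin.lt_def.2 hi)
      have h1 := hmaj ((j' : ℕ) + 1)
      rw [S_succ x j'.isLt, S_succ y j'.isLt] at h1
      simp only [Fin.eta] at h1
      rw [hSeq] at h1
      linarith
    set k' := (Finset.univ.filter (fun i : Fin n => i < j' ∧ y i < x i)).max' hkset with hk'def
    have hk'mem : k' < j' ∧ y k' < x k' := by
      have h := (Finset.univ.filter (fun i : Fin n => i < j' ∧ y i < x i)).max'_mem hkset
      rw [Finset.mem_filter] at h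
      exact h.2
    have hk'max : ∀ i : Fin n, k' < i → i < j' → x i = y i := by
      intro i hki hij
      have h2 : ¬ (y i < x i) := by
        intro hc
        have : i ≤ k' := Finset.le_max' _ _ (by simp [hij, hc])
        exact absurd hki (not_lt.2 this)
      have h1 : ¬ (x i < y i) := fun hc => absurd hij (not_lt.2 (Finset.min'_le _ _ (by simp [hc])))
      linarith [not_lt.1 h1, not_lt.1 h2]
    obtain ⟨hkj, hyxk⟩ := hk'mem
    have hxkj : x k' ≤ x j' := hx hkj.le
    have hyy : y k' < y j' := by linarith
    set δ : ℝ := min (y j' - x j') (x k' - y k') with hδdef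
    have hδpos : 0 < δ := lt_min (by linarith) (by linarith)
    have hδ1 : δ ≤ y j' - x j' := min_le_left _ _
    have hδ2 : δ ≤ x k' - y k' := min_le_right _ _
    set l : ℝ := δ / (y j' - y k') with hldef
    have hl0 : 0 ≤ l := div_nonneg hδpos.le (by linarith)
    have hl1 : l ≤ 1 := by
      rw [div_le_one (by linarith)]
      linarith
    have hlδ : l * (y j' - y k') = δ := div_mul_cancel₀ _ (by linarith)
    set σ := Equiv.swap k' j' with hσdef
    set T : Matrix (Fin n) (Fin n) ℝ :=
      fun a b => (1 - l) * (if b = a then 1 else 0) + l * (if b = σ a then 1 else 0) with hTdef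
    have hTDS : T ∈ doublyStochastic ℝ (Fin n) := by
      rw [mem_doublyStochastic_iff_sum]
      refine ⟨fun a b => add_nonneg (mul_nonneg (by linarith) (by split <;> norm_num))
        (mul_nonneg hl0 (by split <;> norm_num)), fun a => ?_, fun b => ?_⟩
      · simp [hTdef, Finset.sum_add_distrib, ← Finset.mul_sum, Finset.sum_ite_eq]
      · have : ∀ a : Fin n, (b = σ a) = (a = σ b) := by
          intro a
          simp only [eq_iff_iff]
          constructor
          · intro h; rw [h, hσdef, Equiv.swap_apply_self]
          · intro h; rw [h, hσdef, Equiv.swap_apply_self]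
        simp only [hTdef, this]
        simp [Finset.sum_add_distrib, ← Finset.mul_sum, Finset.sum_ite_eq]
    set y' : Fin n → ℝ := fun a => (1 - l) * y a + l * y (σ a) with hy'def
    have hTy : ∀ a, ∑ b, T a b * y b = y' a := by
      intro a
      simp [hTdef, hy'def, add_mul, Finset.sum_add_distrib, mul_assoc,
        ← Finset.mul_sum, Finset.sum_ite_eq]
    have hy'k : y' k' = y k' + δ := by
      simp only [hy'def, hσdef, Equiv.swap_apply_left]
      linarith [hlδ]
    have hy'j : y' j' = y j' - δ := by
      simp only [hy'def, hσdef, Equiv.swap_apply_right]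
      linarith [hlδ]
    have hy'other : ∀ a, a ≠ k' → a ≠ j' → y' a = y a := by
      intro a h1 h2
      simp only [hy'def, hσdef, Equiv.swap_apply_of_ne_of_ne h1 h2]
      ring
    have hkjne : k' ≠ j' := ne_of_lt hkj
    have hy'k_le : y' k' ≤ x k' := by rw [hy'k]; linarith
    have hx_le_y'j : x j' ≤ y' j' := by rw [hy'j]; linarith
    -- monotonicity of y'
    have hy'mono : Monotone y' := by
      intro a b hab
      rcases eq_or_lt_of_le hab with rfl | hab
      · exact le_refl _
      by_cases hak : a = k'
      · subst hak
        by_cases hbj : b = j'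
        · subst hbj; linarith
        have hbk : b ≠ k' := ne_of_gt hab
        rw [hy'other b hbk hbj]
        rcases lt_or_gt_of_ne hbj with hblt | hbgt
        · have : x b = y b := hk'max b hab hblt
          have : x k' ≤ x b := hx hab.le
          linarith
        · have : y j' ≤ y b := hy hbgt.le
          linarith
      by_cases haj : a = j'
      · subst haj
        have hbj : b ≠ j' := ne_of_gt hab
        have hbk : b ≠ k' := ne_of_gt (lt_trans hkj hab)
        rw [hy'other b hbk hbj, hy'j]
        have : y j' ≤ y b := hy hab.le
        linarith
      rw [hy'other a hak haj]
      by_cases hbk : b = k'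
      · subst hbk
        have : y a ≤ y k' := hy hab.le
        rw [hy'k]; linarith
      by_cases hbj : b = j'
      · subst hbj
        rcases lt_or_gt_of_ne hak with halt | hagt
        · have : y a ≤ y k' := hy halt.le
          linarith
        · have : x a = y a := hk'max a hagt hab
          have : x a ≤ x j' := hx hab.le
          linarith
      rw [hy'other b hbk hbj]
      exact hy hab.le
    -- pointwise difference
    have hdiff : ∀ i, y' i - y i = (if i = k' then δ else 0) + (if i = j' then -δ else 0) := by
      intro i
      by_cases h1 : i = k'
      · subst h1; simp [hkjne, hy'k]
      by_cases h2 : i = j'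
      · subst h2; simp [Ne.symm hkjne, hy'j]
      · simp [h1, h2, hy'other i h1 h2]
    -- partial sums of y'
    have hS : ∀ k, S y' k =
        S y k + (if (k' : ℕ) < k then δ else 0) + (if (j' : ℕ) < k then -δ else 0) := by
      intro k
      have h1 : S y' k - S y k =
          ∑ i ∈ Finset.univ.filter (fun i : Fin n => (i : ℕ) < k), (y' i - y i) := by
        rw [Finset.sum_sub_distrib]; rfl
      rw [Finset.sum_congr rfl (fun i _ => hdiff i), Finset.sum_add_distrib,
        Finset.sum_ite_eq' _ k' (fun _ => δ), Finset.sum_ite_eq' _ j' (fun _ => -δ)] at h1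
      simp only [mem_filter, mem_univ, true_and] at h1
      linarith [h1]
    -- sum equality for y'
    have hsum' : ∑ i, x i = ∑ i, y' i := by
      have h1 := hS n
      rw [S_of_le y' le_rfl, S_of_le y le_rfl] at h1
      rw [if_pos j'.isLt, if_pos k'.isLt] at h1
      rw [hsum, h1]; ring
    -- majorization of y'
    have hmaj' : ∀ k, S y' k ≤ S x k := by
      intro k
      rw [hS k]
      by_cases h1 : (j' : ℕ) < k
      · have h2 : (k' : ℕ) < k := lt_trans hkj h1
        rw [if_pos h1, if_pos h2]
        have := hmaj k
        linarith
      by_cases h2 : (k' : ℕ) < k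
      · rw [if_neg h1, if_pos h2]
        have hkle : k ≤ (j' : ℕ) := not_lt.1 h1
        -- show δ ≤ S x k - S y k
        have hsub : ∑ i ∈ Finset.univ.filter (fun i : Fin n => (i : ℕ) < (k' : ℕ) + 1),
            (x i - y i) = ∑ i ∈ Finset.univ.filter (fun i : Fin n => (i : ℕ) < k),
              (x i - y i) := by
          apply Finset.sum_subset
          · intro i hi
            simp only [mem_filter, mem_univ, true_and] at hi ⊢
            omega
          · intro i hi hni
            simp only [mem_filter, mem_univ, true_and] at hi hni
            have hik : k' < i := by rw [Fin.lt_def]; omega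
            have hij : i < j' := by rw [Fin.lt_def]; omega
            rw [hk'max i hik hij]; ring
        have hxy1 : ∑ i ∈ Finset.univ.filter (fun i : Fin n => (i : ℕ) < (k' : ℕ) + 1),
            (x i - y i) = (S x ((k' : ℕ) + 1)) - (S y ((k' : ℕ) + 1)) := by
          rw [Finset.sum_sub_distrib]; rfl
        have hxy2 : ∑ i ∈ Finset.univ.filter (fun i : Fin n => (i : ℕ) < k),
            (x i - y i) = S x k - S y k := by
          rw [Finset.sum_sub_distrib]; rfl
        have hs1 := S_succ x k'.isLt
        have hs2 := S_succ y k'.isLt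
        simp only [Fin.eta] at hs1 hs2
        have hm := hmaj (k' : ℕ)
        have : δ ≤ S x k - S y k := by
          rw [← hxy2, ← hsub, hxy1, hs1, hs2]
          linarith
        linarith
      · rw [if_neg h1, if_neg h2]
        have := hmaj k
        linarith
    -- the number of differing coordinates decreases
    have hsubset : Finset.univ.filter (fun i => x i ≠ y' i) ⊆
        Finset.univ.filter (fun i => x i ≠ y i) := by
      intro i hi
      simp only [mem_filter, mem_univ, true_and] at hi ⊢
      by_cases h1 : i = k'
      · subst h1; exact ne_of_gt hyxk
      by_cases h2 : i = j'
      · subst h2; exact ne_of_lt hj'mem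
      · rw [← hy'other i h1 h2]; exact hi
    have hwitness : ∃ i, (x i ≠ y i) ∧ x i = y' i := by
      rcases le_or_gt (y j' - x j') (x k' - y k') with h | h
      · have hd : δ = y j' - x j' := min_eq_left h
        exact ⟨j', ne_of_lt hj'mem, by rw [hy'j, hd]; ring⟩
      · have hd : δ = x k' - y k' := min_eq_right h.le
        exact ⟨k', ne_of_gt hyxk, by rw [hy'k, hd]; ring⟩
    have hcard' : (Finset.univ.filter (fun i => x i ≠ y' i)).card <
        (Finset.univ.filter (fun i => x i ≠ y i)).card := by
      apply Finset.card_lt_card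
      rw [Finset.ssubset_iff_of_subset hsubset]
      obtain ⟨i, hi1, hi2⟩ := hwitness
      exact ⟨i, by simp [hi1], by simp [hi2]⟩
    -- apply the induction hypothesis
    obtain ⟨M, hMDS, hMy'⟩ := ih x y' hx hy'mono hsum' hmaj' (by omega)
    refine ⟨M * T, mul_mem hMDS hTDS, fun i => ?_⟩
    have : ∑ j, (M * T) i j * y j = ∑ c, M i c * ∑ j, T c j * y j := by
      simp only [Matrix.mul_apply, Finset.sum_mul, Finset.mul_sum, mul_assoc]
      rw [Finset.sum_comm]
    rw [this]
    rw [Finset.sum_congr rfl (fun c _ => by rw [hTy c])]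
    exact hMy' i

end HLPaux

open Finset

/-- **Hardy–Littlewood–Pólya.** For vectors with nondecreasing coordinates,
`x` is majorized by `y` iff `x = M y` for some doubly stochastic matrix `M`. -/
theorem majorization_iff_doublyStochastic (n : ℕ) (x y : Fin n → ℝ)
    (hx : Monotone x) (hy : Monotone y) :
    ((∑ i, x i = ∑ i, y i) ∧
      ∀ k : ℕ, k < n →
        ∑ i ∈ Finset.univ.filter (fun i : Fin n => (i : ℕ) < k), y i ≤
          ∑ i ∈ Finset.univ.filter (fun i : Fin n => (i : ℕ) < k), x i) ↔
    (∃ M : Fin n → Fin n → ℝ,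
      (∀ i j, 0 ≤ M i j) ∧
      (∀ i, ∑ j, M i j = 1) ∧
      (∀ j, ∑ i, M i j = 1) ∧
      (∀ i, ∑ j, M i j * y j = x i)) := by
  constructor
  · rintro ⟨hsum, hpart⟩
    have hmaj : ∀ k, HLPaux.S y k ≤ HLPaux.S x k := by
      intro k
      rcases lt_or_ge k n with h | h
      · exact hpart k h
      · rw [HLPaux.S_of_le y h, HLPaux.S_of_le x h, hsum]
    obtain ⟨M, hMDS, hMy⟩ := HLPaux.exists_DS _ x y hx hy hsum hmaj le_rfl
    rw [mem_doublyStochastic_iff_sum] at hMDS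
    exact ⟨fun i j => M i j, hMDS.1, hMDS.2.1, hMDS.2.2, hMy⟩
  · rintro ⟨M, hM0, hrow, hcol, hMy⟩
    constructor
    · calc ∑ i, x i = ∑ i, ∑ j, M i j * y j :=
            Finset.sum_congr rfl fun i _ => (hMy i).symm
        _ = ∑ j, (∑ i, M i j) * y j := by
            rw [Finset.sum_comm]
            simp [Finset.sum_mul]
        _ = ∑ j, y j := by simp [hcol]
    · intro k hk
      set e : Fin n := ⟨k, hk⟩ with hedef
      set F := Finset.univ.filter (fun i : Fin n => (i : ℕ) < k) with hF
      set c : Fin n → ℝ := fun j => ∑ i ∈ F, M i j with hc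
      have hc0 : ∀ j, 0 ≤ c j := fun j => Finset.sum_nonneg fun i _ => hM0 i j
      have hc1 : ∀ j, c j ≤ 1 := by
        intro j
        rw [← hcol j]
        exact Finset.sum_le_sum_of_subset_of_nonneg (Finset.subset_univ F)
          (fun i _ _ => hM0 i j)
      have hcardF : F.card = k := HLPaux.card_filter_lt hk
      have hck : ∑ j, c j = (k : ℝ) := by
        rw [hc, Finset.sum_comm]
        simp [hrow, hcardF]
      have hSx : ∑ i ∈ F, x i = ∑ j, c j * y j := by
        rw [Finset.sum_congr rfl fun i (_ : i ∈ F) => (hMy i).symm, Finset.sum_comm]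
        simp [hc, Finset.sum_mul]
      have hind : ∑ j, (if j ∈ F then (1:ℝ) else 0) = (k : ℝ) := by
        simp [hcardF]
      have key : ∀ j : Fin n,
          (c j - if j ∈ F then 1 else 0) * y e ≤ (c j - if j ∈ F then 1 else 0) * y j := by
        intro j
        by_cases hj : j ∈ F
        · rw [if_pos hj]
          have hje : j ≤ e := by
            simp only [hF, mem_filter, mem_univ, true_and] at hj
            exact Fin.le_def.2 (by simp [hedef]; omega)
          exact mul_le_mul_of_nonpos_left (hy hje) (by linarith [hc1 j])
        · rw [if_neg hj]
          have hej : e ≤ j := by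
            simp only [hF, mem_filter, mem_univ, true_and] at hj
            exact Fin.le_def.2 (by simp [hedef]; omega)
          exact mul_le_mul_of_nonneg_left (hy hej) (by linarith [hc0 j])
      have hge : (0:ℝ) ≤ ∑ j, (c j - if j ∈ F then 1 else 0) * y j := by
        calc (0:ℝ) = ∑ j, (c j - if j ∈ F then 1 else 0) * y e := by
              rw [← Finset.sum_mul, Finset.sum_sub_distrib, hck, hind]; ring
          _ ≤ _ := Finset.sum_le_sum fun j _ => key j
      have hsplit : ∑ j, (c j - if j ∈ F then 1 else 0) * y j
          = ∑ j, c j * y j - ∑ j ∈ F, y j := by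
        simp only [sub_mul, ite_mul, one_mul, zero_mul, Finset.sum_sub_distrib]
        congr 1
        simp [Finset.sum_ite_mem]
      rw [hsplit] at hge
      rw [hSx] at *
      linarith
end

section
/- Let μ and ν be Borel probability measures on ℝ with μ ≼_sto ν. Then for the product measure μ ⊗ ν on ℝ², (μ⊗ν)({(x,y) : y > x}) + (1/2)(μ⊗ν)({(x,y) : y = x}) ≥ 1/2. Moreover, if μ ≠ ν then this inequality is strict. -/
open MeasureTheory Set
open scoped ENNReal

namespace StoOrderAux

lemma meas_lt : MeasurableSet {p : ℝ × ℝ | p.1 < p.2} :=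
  measurableSet_lt measurable_fst measurable_snd

lemma meas_lt' : MeasurableSet {p : ℝ × ℝ | p.2 < p.1} :=
  measurableSet_lt measurable_snd measurable_fst

lemma meas_le : MeasurableSet {p : ℝ × ℝ | p.1 ≤ p.2} :=
  measurableSet_le measurable_fst measurable_snd

lemma meas_eq : MeasurableSet {p : ℝ × ℝ | p.1 = p.2} :=
  measurableSet_eq_fun measurable_fst measurable_snd

lemma prod_lt (μ ν : Measure ℝ) [SFinite ν] :
    (μ.prod ν) {p : ℝ × ℝ | p.1 < p.2} = ∫⁻ x, ν (Ioi x) ∂μ := by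
  rw [Measure.prod_apply meas_lt]; rfl

lemma prod_le (μ ν : Measure ℝ) [SFinite ν] :
    (μ.prod ν) {p : ℝ × ℝ | p.1 ≤ p.2} = ∫⁻ x, ν (Ici x) ∂μ := by
  rw [Measure.prod_apply meas_le]; rfl

lemma prod_gt (μ ν : Measure ℝ) [SFinite ν] :
    (μ.prod ν) {p : ℝ × ℝ | p.2 < p.1} = ∫⁻ x, ν (Iio x) ∂μ := by
  rw [Measure.prod_apply meas_lt']; rfl

lemma prod_ge (μ ν : Measure ℝ) [SFinite ν] :
    (μ.prod ν) {p : ℝ × ℝ | p.2 ≤ p.1} = ∫⁻ x, ν (Iic x) ∂μ := by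
  rw [Measure.prod_apply (measurableSet_le measurable_snd measurable_fst)]; rfl

lemma swap_lt (μ ν : Measure ℝ) [SFinite μ] [SFinite ν] :
    (ν.prod μ) {p : ℝ × ℝ | p.2 < p.1} = (μ.prod ν) {p : ℝ × ℝ | p.1 < p.2} := by
  rw [← Measure.prod_swap, Measure.map_apply measurable_swap meas_lt']
  rfl

lemma swap_le (μ ν : Measure ℝ) [SFinite μ] [SFinite ν] :
    (ν.prod μ) {p : ℝ × ℝ | p.2 ≤ p.1} = (μ.prod ν) {p : ℝ × ℝ | p.1 ≤ p.2} := by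
  rw [← Measure.prod_swap, Measure.map_apply measurable_swap
    (measurableSet_le measurable_snd measurable_fst)]
  rfl

/-- For a probability measure `m` on `ℝ`, `∫ m(Ioi x) dm + ∫ m(Ici x) dm = 1`. -/
lemma key_oi (m : Measure ℝ) [IsProbabilityMeasure m] :
    ∫⁻ x, m (Ioi x) ∂m + ∫⁻ x, m (Ici x) ∂m = 1 := by
  rw [← prod_lt m m, ← prod_le m m]
  have hc : {p : ℝ × ℝ | p.1 ≤ p.2} = {p : ℝ × ℝ | p.2 < p.1}ᶜ := by
    ext p; simp [not_lt]
  rw [hc, prob_compl_eq_one_sub meas_lt', swap_lt m m]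
  exact add_tsub_cancel_of_le prob_le_one

/-- For a probability measure `m` on `ℝ`, `∫ m(Iio x) dm + ∫ m(Iic x) dm = 1`. -/
lemma key_io (m : Measure ℝ) [IsProbabilityMeasure m] :
    ∫⁻ x, m (Iio x) ∂m + ∫⁻ x, m (Iic x) ∂m = 1 := by
  rw [← prod_gt m m, ← prod_ge m m]
  have hc : {p : ℝ × ℝ | p.2 ≤ p.1} = {p : ℝ × ℝ | p.1 < p.2}ᶜ := by
    ext p; simp [not_lt]
  rw [hc, prob_compl_eq_one_sub meas_lt, ← swap_lt m m]
  exact add_tsub_cancel_of_le prob_le_one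

lemma meas_Iio_mono (μ ν : Measure ℝ) (h : ∀ t : ℝ, ν (Set.Iic t) ≤ μ (Set.Iic t)) (t : ℝ) :
    ν (Iio t) ≤ μ (Iio t) := by
  have hU : Iio t = ⋃ n : ℕ, Iic (t - 1 / (n + 1)) := by
    ext x
    simp only [mem_Iio, mem_iUnion, mem_Iic]
    constructor
    · intro hx
      obtain ⟨n, hn⟩ := exists_nat_one_div_lt (sub_pos.2 hx)
      exact ⟨n, by linarith⟩
    · rintro ⟨n, hn⟩
      have : (0:ℝ) < 1 / (n + 1) := by positivity
      linarith
  have hmono : Monotone (fun n : ℕ => Iic (t - 1 / (n + 1 : ℝ))) := by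
    intro a b hab
    apply Iic_subset_Iic.2
    have hab' : (a:ℝ) ≤ b := Nat.cast_le.2 hab
    have : (1:ℝ) / (b + 1) ≤ 1 / (a + 1) :=
      one_div_le_one_div_of_le (by positivity) (by linarith)
    linarith
  rw [hU, hmono.directed_le.measure_iUnion, hmono.directed_le.measure_iUnion]
  exact iSup_mono fun n => h _

lemma lint_le_one (m m' : Measure ℝ) [IsProbabilityMeasure m] [IsProbabilityMeasure m']
    (s : ℝ → Set ℝ) : ∫⁻ x, m' (s x) ∂m ≤ 1 := by
  calc ∫⁻ x, m' (s x) ∂m ≤ ∫⁻ _, 1 ∂m := lintegral_mono fun x => prob_le_one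
    _ = 1 := by simp

end StoOrderAux

open StoOrderAux

/-- If `μ ≼_sto ν` then for independent `X ∼ μ`, `Y ∼ ν` one has
`P(Y > X) + (1/2) P(Y = X) ≥ 1/2`, with strict inequality when `μ ≠ ν`. -/
theorem stochastic_order_win_probability (μ ν : Measure ℝ)
    [IsProbabilityMeasure μ] [IsProbabilityMeasure ν]
    (h : ∀ t : ℝ, ν (Set.Iic t) ≤ μ (Set.Iic t)) :
    (1 / 2 : ℝ≥0∞) ≤
      (μ.prod ν) {p : ℝ × ℝ | p.1 < p.2} + (μ.prod ν) {p : ℝ × ℝ | p.1 = p.2} / 2 ∧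
    (μ ≠ ν →
      (1 / 2 : ℝ≥0∞) <
        (μ.prod ν) {p : ℝ × ℝ | p.1 < p.2} + (μ.prod ν) {p : ℝ × ℝ | p.1 = p.2} / 2) := by
  -- notation
  set a := (μ.prod ν) {p : ℝ × ℝ | p.1 < p.2} with ha_def
  set b := (μ.prod ν) {p : ℝ × ℝ | p.1 = p.2} with hb_def
  set s := (μ.prod ν) {p : ℝ × ℝ | p.1 ≤ p.2} with hs_def
  -- pointwise inequalities
  have hIio : ∀ t : ℝ, ν (Iio t) ≤ μ (Iio t) := meas_Iio_mono μ ν h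
  have hIoi : ∀ t : ℝ, μ (Ioi t) ≤ ν (Ioi t) := by
    intro t
    have h1 : Ioi t = (Iic t)ᶜ := by ext x; simp [not_le]
    rw [h1, prob_compl_eq_one_sub measurableSet_Iic,
      prob_compl_eq_one_sub measurableSet_Iic]
    exact tsub_le_tsub_left (h t) 1
  have hIci : ∀ t : ℝ, μ (Ici t) ≤ ν (Ici t) := by
    intro t
    have h1 : Ici t = (Iio t)ᶜ := by ext x; simp [not_lt]
    rw [h1, prob_compl_eq_one_sub measurableSet_Iio,
      prob_compl_eq_one_sub measurableSet_Iio]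
    exact tsub_le_tsub_left (hIio t) 1
  -- s = a + b
  have hsab : s = a + b := by
    rw [hs_def, ha_def, hb_def]
    have hset : {p : ℝ × ℝ | p.1 ≤ p.2} = {p : ℝ × ℝ | p.1 < p.2} ∪ {p : ℝ × ℝ | p.1 = p.2} := by
      ext p; simp [le_iff_lt_or_eq]
    rw [hset, measure_union _ meas_eq]
    rintro q hq1 hq2 x hx
    exact absurd (hq2 hx) (ne_of_lt (hq1 hx))
  -- chains
  have hA1 : ∫⁻ x, μ (Ioi x) ∂μ ≤ a := by
    rw [ha_def, prod_lt μ ν]; exact lintegral_mono fun x => hIoi x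
  have hA2 : ∫⁻ x, μ (Ici x) ∂μ ≤ s := by
    rw [hs_def, prod_le μ ν]; exact lintegral_mono fun x => hIci x
  have hB1 : ∫⁻ y, ν (Iio y) ∂ν ≤ a := by
    rw [ha_def, ← swap_lt μ ν, prod_gt ν μ]; exact lintegral_mono fun y => hIio y
  have hB2 : ∫⁻ y, ν (Iic y) ∂ν ≤ s := by
    rw [hs_def, ← swap_le μ ν, prod_ge ν μ]; exact lintegral_mono fun y => h y
  -- main inequality 1 ≤ a + s
  have hmain : 1 ≤ a + s := by
    calc (1:ℝ≥0∞) = ∫⁻ x, μ (Ioi x) ∂μ + ∫⁻ x, μ (Ici x) ∂μ := (key_oi μ).symm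
      _ ≤ a + s := add_le_add hA1 hA2
  have hb_ne_top : b ≠ ∞ := (lt_of_le_of_lt prob_le_one ENNReal.one_lt_top).ne
  have ha_ne_top : a ≠ ∞ := (lt_of_le_of_lt prob_le_one ENNReal.one_lt_top).ne
  have hs_ne_top : s ≠ ∞ := (lt_of_le_of_lt prob_le_one ENNReal.one_lt_top).ne
  have hkey : (a + b / 2) * 2 = a + s := by
    rw [add_mul, ENNReal.div_mul_cancel (by norm_num) (by norm_num), hsab]
    ring
  have hfirst : (1 / 2 : ℝ≥0∞) ≤ a + b / 2 := by
    rw [ENNReal.div_le_iff (by norm_num) (by norm_num), hkey]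
    exact hmain
  refine ⟨hfirst, fun hne => ?_⟩
  rcases lt_or_eq_of_le hfirst with hlt | heq
  · exact hlt
  -- equality case: derive a contradiction
  exfalso
  have heq1 : a + s = 1 := by
    rw [← hkey, ← heq, ENNReal.div_mul_cancel (by norm_num) (by norm_num)]
  -- split equalities
  have hsplit : ∀ (A1 A2 : ℝ≥0∞), A1 ≤ a → A2 ≤ s → A1 + A2 = 1 → a = A1 ∧ s = A2 := by
    intro A1 A2 h1 h2 h12
    have hA1t : A1 ≠ ∞ := by rintro rfl; simp at h12
    have hA2t : A2 ≠ ∞ := by rintro rfl; simp [add_comm] at h12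
    constructor
    · by_contra hne'
      have : A1 < a := lt_of_le_of_ne h1 (Ne.symm hne')
      have : A1 + A2 < a + s := ENNReal.add_lt_add_of_lt_of_le hA2t this h2
      rw [h12, heq1] at this
      exact lt_irrefl _ this
    · by_contra hne'
      have : A2 < s := lt_of_le_of_ne h2 (Ne.symm hne')
      have : A1 + A2 < a + s := ENNReal.add_lt_add_of_le_of_lt hA1t h1 this
      rw [h12, heq1] at this
      exact lt_irrefl _ this
  obtain ⟨haA1, -⟩ := hsplit _ _ hA1 hA2 (key_oi μ)
  obtain ⟨haB1, hsB2⟩ := hsplit _ _ hB1 hB2 (key_io ν)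
  -- a.e. equalities
  have hae1 : (fun x => μ (Ioi x)) =ᵐ[μ] fun x => ν (Ioi x) := by
    apply ae_eq_of_ae_le_of_lintegral_le (ae_of_all _ hIoi)
    · exact ne_of_lt (lt_of_le_of_lt (lint_le_one μ μ _) ENNReal.one_lt_top)
    · exact (Antitone.measurable fun x y hxy => measure_mono (Ioi_subset_Ioi hxy)).aemeasurable
    · rw [← prod_lt μ ν, ← ha_def, haA1]
  have hae3 : (fun y => ν (Iio y)) =ᵐ[ν] fun y => μ (Iio y) := by
    apply ae_eq_of_ae_le_of_lintegral_le (ae_of_all _ hIio)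
    · exact ne_of_lt (lt_of_le_of_lt (lint_le_one ν ν _) ENNReal.one_lt_top)
    · exact (Monotone.measurable fun x y hxy => measure_mono (Iio_subset_Iio hxy)).aemeasurable
    · rw [← prod_gt ν μ, swap_lt μ ν, ← ha_def, haB1]
  have hae4 : (fun y => ν (Iic y)) =ᵐ[ν] fun y => μ (Iic y) := by
    apply ae_eq_of_ae_le_of_lintegral_le (ae_of_all _ h)
    · exact ne_of_lt (lt_of_le_of_lt (lint_le_one ν ν _) ENNReal.one_lt_top)
    · exact (Monotone.measurable fun x y hxy => measure_mono (Iic_subset_Iic.2 hxy)).aemeasurable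
    · rw [← prod_ge ν μ, swap_le μ ν, ← hs_def, hsB2]
  -- convert hae1 to Iic equality μ-a.e.
  have hae1' : (fun x => ν (Iic x)) =ᵐ[μ] fun x => μ (Iic x) := by
    filter_upwards [hae1] with x hx
    have h1 : Iic x = (Ioi x)ᶜ := by ext y; simp [not_lt]
    rw [h1, prob_compl_eq_one_sub measurableSet_Ioi,
      prob_compl_eq_one_sub measurableSet_Ioi, hx]
  -- null sets
  have hμD : μ {x | ¬ ν (Iic x) = μ (Iic x)} = 0 := hae1'
  have hνD : ν {x | ¬ ν (Iic x) = μ (Iic x)} = 0 := hae4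
  have hνD' : ν {x | ¬ ν (Iio x) = μ (Iio x)} = 0 := hae3
  -- find a point of strict inequality
  obtain ⟨t₀, ht₀⟩ : ∃ t₀, ν (Iic t₀) < μ (Iic t₀) := by
    by_contra hc
    push_neg at hc
    exact hne (Measure.ext_of_Iic μ ν fun t => le_antisymm (hc t) (h t))
  -- equality points above t₀
  set E : Set ℝ := {t | t₀ < t ∧ ν (Iic t) = μ (Iic t)} with hE_def
  by_cases hE : E.Nonempty
  · -- b* := sInf E
    have hbdd : BddBelow E := ⟨t₀, fun e he => le_of_lt he.1⟩
    set c := sInf E with hc_def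
    obtain ⟨u, hu_anti, hu_tend, hu_mem⟩ := exists_seq_tendsto_sInf hE hbdd
    have hu_ge : ∀ n, c ≤ u n := fun n => csInf_le hbdd (hu_mem n)
    have hInter : (⋂ n, Iic (u n)) = Iic c := by
      ext x
      simp only [mem_iInter, mem_Iic]
      exact ⟨fun hx => ge_of_tendsto' hu_tend hx, fun hx n => le_trans hx (hu_ge n)⟩
    have hanti : Antitone fun n : ℕ => Iic (u n) :=
      fun i j hij => Iic_subset_Iic.2 (hu_anti hij)
    have hmeasIic : ν (Iic c) = μ (Iic c) := by
      have h1 : Filter.Tendsto (fun n => ν (Iic (u n))) Filter.atTop (nhds (ν (⋂ n, Iic (u n)))) :=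
        tendsto_measure_iInter_atTop (fun n => measurableSet_Iic.nullMeasurableSet) hanti
          ⟨0, measure_ne_top _ _⟩
      have h2 : Filter.Tendsto (fun n => μ (Iic (u n))) Filter.atTop (nhds (μ (⋂ n, Iic (u n)))) :=
        tendsto_measure_iInter_atTop (fun n => measurableSet_Iic.nullMeasurableSet) hanti
          ⟨0, measure_ne_top _ _⟩
      rw [hInter] at h1 h2
      have heqseq : (fun n => ν (Iic (u n))) = fun n => μ (Iic (u n)) := by
        funext n; exact (hu_mem n).2
      rw [heqseq] at h1
      exact tendsto_nhds_unique h1 h2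
    have hct₀ : t₀ < c := by
      rcases lt_or_eq_of_le (show t₀ ≤ c from le_csInf hE fun e he => le_of_lt he.1) with h' | h'
      · exact h'
      · rw [← h'] at hmeasIic
        exact absurd hmeasIic (ne_of_lt ht₀)
    -- Ioo t₀ c is null for both measures
    have hsub : Ioo t₀ c ⊆ {x | ¬ ν (Iic x) = μ (Iic x)} := by
      intro x hx
      intro hcontra
      have hxE : x ∈ E := ⟨hx.1, hcontra⟩
      exact absurd (csInf_le hbdd hxE) (not_le.2 hx.2)
    have hμIoo : μ (Ioo t₀ c) = 0 := measure_mono_null hsub hμD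
    have hνIoo : ν (Ioo t₀ c) = 0 := measure_mono_null hsub hνD
    -- Iio c measures
    have hIio_eq : ∀ (m : Measure ℝ), m (Ioo t₀ c) = 0 → m (Iio c) = m (Iic t₀) := by
      intro m hm
      apply le_antisymm
      · have hset : Iio c ⊆ Iic t₀ ∪ Ioo t₀ c := by
          intro x hx
          rcases le_or_gt x t₀ with h' | h'
          · exact Or.inl h'
          · exact Or.inr ⟨h', hx⟩
        calc m (Iio c) ≤ m (Iic t₀ ∪ Ioo t₀ c) := measure_mono hset
          _ ≤ m (Iic t₀) + m (Ioo t₀ c) := measure_union_le _ _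
          _ = m (Iic t₀) := by rw [hm, add_zero]
      · exact measure_mono fun x hx => lt_of_le_of_lt hx hct₀
    have hμIio : μ (Iio c) = μ (Iic t₀) := hIio_eq μ hμIoo
    have hνIio : ν (Iio c) = ν (Iic t₀) := hIio_eq ν hνIoo
    -- ν has an atom at c
    have hatom : ν {c} ≠ 0 := by
      intro h0
      have h1 : ν (Iic c) ≤ ν (Iio c) := by
        have hset : Iic c ⊆ Iio c ∪ {c} := by
          intro x hx
          rcases lt_or_eq_of_le (show x ≤ c from hx) with h' | h'
          · exact Or.inl h'
          · exact Or.inr h'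
        calc ν (Iic c) ≤ ν (Iio c) + ν {c} := le_trans (measure_mono hset) (measure_union_le _ _)
          _ = ν (Iio c) := by rw [h0, add_zero]
      have h2 : μ (Iic t₀) ≤ ν (Iic t₀) := by
        calc μ (Iic t₀) ≤ μ (Iic c) := measure_mono (Iic_subset_Iic.2 (le_of_lt hct₀))
          _ = ν (Iic c) := hmeasIic.symm
          _ ≤ ν (Iio c) := h1
          _ = ν (Iic t₀) := hνIio
      exact absurd h2 (not_le.2 ht₀)
    -- but ν-a.e. Iio values agree, contradiction at the atom c
    have hc_mem : c ∈ {x | ¬ ν (Iio x) = μ (Iio x)} := by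
      simp only [mem_setOf_eq]
      rw [hνIio, hμIio]
      exact ne_of_lt ht₀
    have : ν {c} ≤ ν {x | ¬ ν (Iio x) = μ (Iio x)} :=
      measure_mono (singleton_subset_iff.2 hc_mem)
    rw [hνD'] at this
    exact hatom (le_antisymm this zero_le)
  · -- no equality point above t₀ : then both measures give full mass to Iic t₀
    have hsub : Ici t₀ ⊆ {x | ¬ ν (Iic x) = μ (Iic x)} := by
      intro x hx hcontra
      rcases lt_or_eq_of_le (show t₀ ≤ x from hx) with h' | h'
      · exact hE ⟨x, h', hcontra⟩
      · rw [← h'] at hcontra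
        exact absurd hcontra (ne_of_lt ht₀)
    have hμ1 : μ (Iic t₀) = 1 := by
      have : μ (Ici t₀) = 0 := measure_mono_null hsub hμD
      have hIoi0 : μ (Ioi t₀) = 0 := measure_mono_null Ioi_subset_Ici_self this
      have hc : Iic t₀ = (Ioi t₀)ᶜ := by ext y; simp [not_lt]
      rw [hc, prob_compl_eq_one_sub measurableSet_Ioi, hIoi0, tsub_zero]
    have hν1 : ν (Iic t₀) = 1 := by
      have : ν (Ici t₀) = 0 := measure_mono_null hsub hνD
      have hIoi0 : ν (Ioi t₀) = 0 := measure_mono_null Ioi_subset_Ici_self this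
      have hc : Iic t₀ = (Ioi t₀)ᶜ := by ext y; simp [not_lt]
      rw [hc, prob_compl_eq_one_sub measurableSet_Ioi, hIoi0, tsub_zero]
    rw [hμ1, hν1] at ht₀
    exact lt_irrefl _ ht₀
end

section
/- Let μ and ν be Borel probability measures on ℝ with finite first moment such that μ ≼_sto ν. Then μ = ν if and only if ∫ x dμ(x) = ∫ x dν(x). -/
open MeasureTheory Set Filter Topology
open scoped ENNReal NNReal

/-- Layer cake for the positive part. -/
lemma sto_layercake_pos (μ : Measure ℝ) [IsProbabilityMeasure μ] :
    ∫⁻ x, ENNReal.ofReal x ∂μ = ∫⁻ t in Set.Ioi (0:ℝ), μ (Set.Ici t) := by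
  have h0 : ∀ x : ℝ, ENNReal.ofReal x = ENNReal.ofReal (max x 0) := by
    intro x
    rcases le_total x 0 with hx | hx
    · rw [ENNReal.ofReal_of_nonpos hx, max_eq_right hx, ENNReal.ofReal_zero]
    · rw [max_eq_left hx]
  calc ∫⁻ x, ENNReal.ofReal x ∂μ = ∫⁻ x, ENNReal.ofReal (max x 0) ∂μ := lintegral_congr h0
    _ = ∫⁻ t in Set.Ioi 0, μ {a : ℝ | t ≤ max a 0} :=
        lintegral_eq_lintegral_meas_le μ (Eventually.of_forall fun x => le_max_right _ _)
          (measurable_id.max measurable_const).aemeasurable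
    _ = ∫⁻ t in Set.Ioi 0, μ (Set.Ici t) := by
        refine setLIntegral_congr_fun measurableSet_Ioi (fun t ht => ?_)
        congr 1
        ext a
        simp only [Set.mem_setOf_eq, Set.mem_Ici, le_max_iff]
        exact ⟨fun h' => h'.resolve_right (not_le.mpr ht), Or.inl⟩

/-- Layer cake for the negative part. -/
lemma sto_layercake_neg (μ : Measure ℝ) [IsProbabilityMeasure μ] :
    ∫⁻ x, ENNReal.ofReal (-x) ∂μ = ∫⁻ t in Set.Ioi (0:ℝ), μ (Set.Iic (-t)) := by
  have h0 : ∀ x : ℝ, ENNReal.ofReal (-x) = ENNReal.ofReal (max (-x) 0) := by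
    intro x
    rcases le_total (-x) 0 with hx | hx
    · rw [ENNReal.ofReal_of_nonpos hx, max_eq_right hx, ENNReal.ofReal_zero]
    · rw [max_eq_left hx]
  calc ∫⁻ x, ENNReal.ofReal (-x) ∂μ = ∫⁻ x, ENNReal.ofReal (max (-x) 0) ∂μ := lintegral_congr h0
    _ = ∫⁻ t in Set.Ioi 0, μ {a : ℝ | t ≤ max (-a) 0} :=
        lintegral_eq_lintegral_meas_le μ (Eventually.of_forall fun x => le_max_right _ _)
          (measurable_id.neg.max measurable_const).aemeasurable
    _ = ∫⁻ t in Set.Ioi 0, μ (Set.Iic (-t)) := by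
        refine setLIntegral_congr_fun measurableSet_Ioi (fun t ht => ?_)
        congr 1
        ext a
        simp only [Set.mem_setOf_eq, Set.mem_Iic, le_max_iff]
        constructor
        · intro h'
          have := h'.resolve_right (not_le.mpr ht)
          linarith
        · intro h'; left; linarith

/-- The nested intersection of right-shrinking closed half-lines. -/
lemma sto_iInter_Iic (t : ℝ) : (⋂ n : ℕ, Set.Iic (t + 1/(n+1))) = Set.Iic t := by
  ext x
  simp only [Set.mem_iInter, Set.mem_Iic]
  constructor
  · intro hx
    by_contra hxt
    push_neg at hxt
    obtain ⟨n, hn⟩ := exists_nat_one_div_lt (sub_pos.mpr hxt)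
    have := hx n
    push_cast at this hn ⊢
    linarith
  · intro hx n
    have : (0:ℝ) < 1/(n+1) := by positivity
    linarith

/-- Continuity from above of the CDF. -/
lemma sto_tendsto_Iic (ν : Measure ℝ) [IsProbabilityMeasure ν] (t : ℝ) :
    Tendsto (fun n : ℕ => ν (Set.Iic (t + 1/(n+1)))) atTop (𝓝 (ν (Set.Iic t))) := by
  have h1 := tendsto_measure_iInter_atTop (μ := ν)
    (s := fun n : ℕ => Set.Iic (t + 1/(n+1)))
    (fun n => measurableSet_Iic.nullMeasurableSet)
    (fun i j hij => Set.Iic_subset_Iic.mpr (by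
      have h2 : (i:ℝ) + 1 ≤ (j:ℝ) + 1 := by exact_mod_cast Nat.succ_le_succ hij
      have h3 : (0:ℝ) < (i:ℝ) + 1 := by positivity
      have : 1/((j:ℝ)+1) ≤ 1/((i:ℝ)+1) := by gcongr
      linarith)) ⟨0, measure_ne_top _ _⟩
  rw [sto_iInter_Iic] at h1
  exact h1

/-- From dominance of CDFs to dominance of tails. -/
lemma sto_Ici_le (μ ν : Measure ℝ) [IsProbabilityMeasure μ] [IsProbabilityMeasure ν]
    (h : ∀ t : ℝ, ν (Set.Iic t) ≤ μ (Set.Iic t)) (t : ℝ) :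
    μ (Set.Ici t) ≤ ν (Set.Ici t) := by
  have hIoi : ∀ s : ℝ, μ (Set.Ioi s) ≤ ν (Set.Ioi s) := by
    intro s
    have h1 : μ (Set.Ioi s) = 1 - μ (Set.Iic s) := by
      rw [← Set.compl_Iic, measure_compl measurableSet_Iic (measure_ne_top μ _), measure_univ]
    have h2 : ν (Set.Ioi s) = 1 - ν (Set.Iic s) := by
      rw [← Set.compl_Iic, measure_compl measurableSet_Iic (measure_ne_top ν _), measure_univ]
    rw [h1, h2]
    exact tsub_le_tsub_left (h s) 1
  have hint : (⋂ n : ℕ, Set.Ioi (t - 1/(n+1))) = Set.Ici t := by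
    ext x
    simp only [Set.mem_iInter, Set.mem_Ioi, Set.mem_Ici]
    constructor
    · intro hx
      by_contra hxt
      push_neg at hxt
      obtain ⟨n, hn⟩ := exists_nat_one_div_lt (sub_pos.mpr hxt)
      have := hx n
      push_cast at this hn ⊢
      linarith
    · intro hx n
      have : (0:ℝ) < 1/(n+1) := by positivity
      linarith
  have h1 := tendsto_measure_iInter_atTop (μ := ν)
    (s := fun n : ℕ => Set.Ioi (t - 1/(n+1)))
    (fun n => measurableSet_Ioi.nullMeasurableSet)
    (fun i j hij => Set.Ioi_subset_Ioi (by
      have h2 : (i:ℝ) + 1 ≤ (j:ℝ) + 1 := by exact_mod_cast Nat.succ_le_succ hij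
      have h3 : (0:ℝ) < (i:ℝ) + 1 := by positivity
      have : 1/((j:ℝ)+1) ≤ 1/((i:ℝ)+1) := by gcongr
      linarith)) ⟨0, measure_ne_top _ _⟩
  rw [hint] at h1
  refine ge_of_tendsto h1 (Eventually.of_forall fun n => ?_)
  calc μ (Set.Ici t) ≤ μ (Set.Ioi (t - 1/(n+1))) := by
        refine measure_mono fun x hx => ?_
        simp only [Set.mem_Ici] at hx
        simp only [Set.mem_Ioi]
        have : (0:ℝ) < 1/(n+1) := by positivity
        linarith
    _ ≤ ν (Set.Ioi (t - 1/(n+1))) := hIoi _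

/-- If lintegrals agree, the functions agree a.e. (given pointwise ≤ and finiteness). -/
lemma sto_ae_eq_of_lintegral_eq {m : Measure ℝ} {f g : ℝ → ℝ≥0∞} (hfm : Measurable f)
    (hgm : Measurable g) (hle : f ≤ g) (hfin : ∫⁻ t, f t ∂m ≠ ⊤)
    (heq : ∫⁻ t, g t ∂m = ∫⁻ t, f t ∂m) : g =ᵐ[m] f := by
  have hsub : ∫⁻ t, (g t - f t) ∂m = ∫⁻ t, g t ∂m - ∫⁻ t, f t ∂m :=
    lintegral_sub hfm hfin (Eventually.of_forall hle)
  rw [heq, tsub_self] at hsub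
  have h0 : (fun t => g t - f t) =ᵐ[m] 0 :=
    (lintegral_eq_zero_iff (hgm.sub hfm)).mp hsub
  filter_upwards [h0] with t ht
  have hle' : g t ≤ f t := tsub_eq_zero_iff_le.mp ht
  exact le_antisymm hle' (hle t)

/-- If `μ ≼_sto ν` (both with finite first moment), then `μ = ν` iff the two
measures have the same mean. -/
theorem stochastic_order_eq_iff_eq_mean (μ ν : Measure ℝ)
    [IsProbabilityMeasure μ] [IsProbabilityMeasure ν]
    (hμ : Integrable (fun x : ℝ => x) μ) (hν : Integrable (fun x : ℝ => x) ν)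
    (h : ∀ t : ℝ, ν (Set.Iic t) ≤ μ (Set.Iic t)) :
    μ = ν ↔ ∫ x, x ∂μ = ∫ x, x ∂ν := by
  constructor
  · intro he; rw [he]
  intro hmean
  -- finiteness of the four lintegrals
  have hPμfin : ∫⁻ x, ENNReal.ofReal x ∂μ ≠ ⊤ :=
    ne_of_lt (lt_of_le_of_lt (lintegral_mono fun x => Real.ofReal_le_enorm x)
      hμ.hasFiniteIntegral)
  have hPνfin : ∫⁻ x, ENNReal.ofReal x ∂ν ≠ ⊤ :=
    ne_of_lt (lt_of_le_of_lt (lintegral_mono fun x => Real.ofReal_le_enorm x)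
      hν.hasFiniteIntegral)
  have hNμfin : ∫⁻ x, ENNReal.ofReal (-x) ∂μ ≠ ⊤ := by
    refine ne_of_lt (lt_of_le_of_lt (lintegral_mono fun x => ?_) hμ.hasFiniteIntegral)
    calc ENNReal.ofReal (-x) ≤ ‖-x‖ₑ := Real.ofReal_le_enorm _
      _ = ‖x‖ₑ := by rw [enorm_neg]
  have hNνfin : ∫⁻ x, ENNReal.ofReal (-x) ∂ν ≠ ⊤ := by
    refine ne_of_lt (lt_of_le_of_lt (lintegral_mono fun x => ?_) hν.hasFiniteIntegral)
    calc ENNReal.ofReal (-x) ≤ ‖-x‖ₑ := Real.ofReal_le_enorm _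
      _ = ‖x‖ₑ := by rw [enorm_neg]
  -- pointwise inequalities between the layer-cake integrands
  have hP : ∫⁻ x, ENNReal.ofReal x ∂μ ≤ ∫⁻ x, ENNReal.ofReal x ∂ν := by
    rw [sto_layercake_pos μ, sto_layercake_pos ν]
    exact lintegral_mono fun t => sto_Ici_le μ ν h t
  have hN : ∫⁻ x, ENNReal.ofReal (-x) ∂ν ≤ ∫⁻ x, ENNReal.ofReal (-x) ∂μ := by
    rw [sto_layercake_neg μ, sto_layercake_neg ν]
    exact lintegral_mono fun t => h (-t)
  -- means as differences
  have hmμ := integral_eq_lintegral_pos_part_sub_lintegral_neg_part hμ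
  have hmν := integral_eq_lintegral_pos_part_sub_lintegral_neg_part hν
  rw [hmμ, hmν] at hmean
  have hPr : (∫⁻ x, ENNReal.ofReal x ∂μ).toReal ≤ (∫⁻ x, ENNReal.ofReal x ∂ν).toReal :=
    ENNReal.toReal_mono hPνfin hP
  have hNr : (∫⁻ x, ENNReal.ofReal (-x) ∂ν).toReal ≤ (∫⁻ x, ENNReal.ofReal (-x) ∂μ).toReal :=
    ENNReal.toReal_mono hNμfin hN
  have hPeq : ∫⁻ x, ENNReal.ofReal x ∂ν = ∫⁻ x, ENNReal.ofReal x ∂μ := by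
    exact (ENNReal.toReal_eq_toReal_iff' hPνfin hPμfin).mp (by linarith)
  have hNeq : ∫⁻ x, ENNReal.ofReal (-x) ∂μ = ∫⁻ x, ENNReal.ofReal (-x) ∂ν := by
    exact ((ENNReal.toReal_eq_toReal_iff' hNμfin hNνfin).mp (by linarith))
  -- translate into equality of layer-cake integrals
  rw [sto_layercake_pos μ, sto_layercake_pos ν] at hPeq
  rw [sto_layercake_pos μ] at hPμfin
  rw [sto_layercake_neg μ, sto_layercake_neg ν] at hNeq
  rw [sto_layercake_neg ν] at hNνfin
  -- measurability of the four CDF-type functions (they are antitone)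
  have mIciμ : Measurable (fun t : ℝ => μ (Set.Ici t)) :=
    Antitone.measurable fun a b hab => measure_mono (Set.Ici_subset_Ici.mpr hab)
  have mIciν : Measurable (fun t : ℝ => ν (Set.Ici t)) :=
    Antitone.measurable fun a b hab => measure_mono (Set.Ici_subset_Ici.mpr hab)
  have mIicμ : Measurable (fun t : ℝ => μ (Set.Iic (-t))) :=
    Antitone.measurable fun a b hab => measure_mono (Set.Iic_subset_Iic.mpr (by linarith))
  have mIicν : Measurable (fun t : ℝ => ν (Set.Iic (-t))) :=
    Antitone.measurable fun a b hab => measure_mono (Set.Iic_subset_Iic.mpr (by linarith))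
  -- a.e. equality of tails on (0, ∞)
  have haeP : (fun t : ℝ => ν (Set.Ici t)) =ᵐ[volume.restrict (Set.Ioi 0)]
      (fun t : ℝ => μ (Set.Ici t)) :=
    sto_ae_eq_of_lintegral_eq mIciμ mIciν (fun t => sto_Ici_le μ ν h t) hPμfin hPeq
  have haeN : (fun t : ℝ => μ (Set.Iic (-t))) =ᵐ[volume.restrict (Set.Ioi 0)]
      (fun t : ℝ => ν (Set.Iic (-t))) :=
    sto_ae_eq_of_lintegral_eq mIicν mIicμ (fun t => h (-t)) hNνfin hNeq
  -- the good set where the CDFs coincide (in a usable form)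
  set E : Set ℝ := {s : ℝ | μ (Set.Iio s) = ν (Set.Iio s) ∨ μ (Set.Iic s) = ν (Set.Iic s)}
    with hE_def
  have hEc : volume Eᶜ = 0 := by
    have hB1 : volume ({t : ℝ | ¬ ν (Set.Ici t) = μ (Set.Ici t)} ∩ Set.Ioi 0) = 0 := by
      have := haeP
      rw [EventuallyEq, ae_iff, Measure.restrict_apply₀'] at this
      · exact this
      · exact measurableSet_Ioi.nullMeasurableSet
    have hB2 : volume ({t : ℝ | ¬ μ (Set.Iic (-t)) = ν (Set.Iic (-t))} ∩ Set.Ioi 0) = 0 := by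
      have := haeN
      rw [EventuallyEq, ae_iff, Measure.restrict_apply₀'] at this
      · exact this
      · exact measurableSet_Ioi.nullMeasurableSet
    have hB2' : volume (-({t : ℝ | ¬ μ (Set.Iic (-t)) = ν (Set.Iic (-t))} ∩ Set.Ioi 0)) = 0 := by
      rw [Measure.measure_neg]; exact hB2
    refine measure_mono_null (fun s hs => ?_)
      (measure_union_null (measure_union_null hB1 hB2') (measure_singleton (0:ℝ)))
    simp only [hE_def, Set.mem_compl_iff, Set.mem_setOf_eq, not_or] at hs
    obtain ⟨hs1, hs2⟩ := hs
    rcases lt_trichotomy s 0 with hlt | heq | hgt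
    · -- s < 0 : use the negative-side bad set
      refine Set.mem_union_left _ (Set.mem_union_right _ ?_)
      rw [Set.mem_neg]
      refine ⟨?_, Set.mem_Ioi.mpr (neg_pos.mpr hlt)⟩
      simp only [Set.mem_setOf_eq, neg_neg]
      exact fun hc => hs2 hc
    · exact Set.mem_union_right _ (by simp [heq])
    · -- s > 0 : use the positive-side bad set
      refine Set.mem_union_left _ (Set.mem_union_left _ ⟨?_, hgt⟩)
      simp only [Set.mem_setOf_eq]
      intro hc
      apply hs1
      have hμc : μ (Set.Iio s) = 1 - μ (Set.Ici s) := by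
        rw [← Set.compl_Ici, measure_compl measurableSet_Ici (measure_ne_top μ _), measure_univ]
      have hνc : ν (Set.Iio s) = 1 - ν (Set.Ici s) := by
        rw [← Set.compl_Ici, measure_compl measurableSet_Ici (measure_ne_top ν _), measure_univ]
      rw [hμc, hνc, hc]
  -- key inequality
  have key : ∀ t : ℝ, μ (Set.Iic t) ≤ ν (Set.Iic t) := by
    intro t
    refine ge_of_tendsto (sto_tendsto_Iic ν t) (Eventually.of_forall fun n => ?_)
    have hpos : (0:ℝ) < 1/(n+1) := by positivity
    have hne : (E ∩ Set.Ioo t (t + 1/(n+1))).Nonempty := by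
      rw [Set.nonempty_iff_ne_empty]
      intro hempty
      have hsub : Set.Ioo t (t + 1/(n+1)) ⊆ Eᶜ := by
        intro x hx
        by_contra hxE
        simp only [Set.mem_compl_iff, not_not] at hxE
        exact Set.eq_empty_iff_forall_notMem.mp hempty x ⟨hxE, hx⟩
      have := measure_mono_null hsub hEc
      rw [Real.volume_Ioo] at this
      simp only [ENNReal.ofReal_eq_zero] at this
      linarith
    obtain ⟨s, hsE, hs1, hs2⟩ := hne
    rcases hsE with hIio | hIic
    · calc μ (Set.Iic t) ≤ μ (Set.Iio s) := measure_mono fun x hx => lt_of_le_of_lt hx hs1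
        _ = ν (Set.Iio s) := hIio
        _ ≤ ν (Set.Iic (t + 1/(n+1))) :=
          measure_mono fun x hx => le_of_lt (hx.trans hs2)
    · calc μ (Set.Iic t) ≤ μ (Set.Iic s) := measure_mono (Set.Iic_subset_Iic.mpr hs1.le)
        _ = ν (Set.Iic s) := hIic
        _ ≤ ν (Set.Iic (t + 1/(n+1))) := measure_mono (Set.Iic_subset_Iic.mpr hs2.le)
  exact Measure.ext_of_Iic μ ν fun a => le_antisymm (key a) (h a)
end

section
/- Let μ_1, …, μ_n be Borel probability measures on ℝ that are nondecreasing in stochastic order (μ_i ≼_sto μ_{i+1} for all i), and define p_{ij} = (μ_i ⊗ μ_j)({(s,t) : s > t}) + (1/2)(μ_i ⊗ μ_j)({(s,t) : s = t}) for i ≠ j. Then the matrix (p_{ij}) satisfies strong stochastic transitivity: for all distinct i, j, k, if p_{ij} ≥ 1/2 and p_{jk} ≥ 1/2 then p_{ik} ≥ max(p_{ij}, p_{jk}). -/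
open MeasureTheory Set ENNReal

namespace SSTAux

noncomputable def E (ν₁ ν₂ : Measure ℝ) : ℝ :=
  ((ν₁.prod ν₂) {q : ℝ × ℝ | q.2 < q.1}).toReal +
    (1 / 2) * ((ν₁.prod ν₂) {q : ℝ × ℝ | q.1 = q.2}).toReal

noncomputable def F (ν₁ ν₂ : Measure ℝ) : ℝ≥0∞ :=
  ∫⁻ s, (ν₂ (Iio s) + ν₂ (Iic s)) ∂ν₁

lemma Iio_eq_iUnion (s : ℝ) : Iio s = ⋃ n : ℕ, Iic (s - 1/(n+1)) := by
  ext x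
  simp only [mem_Iio, mem_iUnion, mem_Iic]
  constructor
  · intro hx
    obtain ⟨n, hn⟩ := exists_nat_one_div_lt (sub_pos.mpr hx)
    exact ⟨n, by linarith⟩
  · rintro ⟨n, hn⟩
    have h0 : (0:ℝ) < 1/(n+1) := by positivity
    linarith

lemma meas_Iio (ν : Measure ℝ) (s : ℝ) :
    ν (Iio s) = ⨆ n : ℕ, ν (Iic (s - 1/(n+1))) := by
  rw [Iio_eq_iUnion s]
  refine Directed.measure_iUnion (Monotone.directed_le ?_)
  intro m n hmn
  apply Iic_subset_Iic.2
  have h1 : (1:ℝ)/(n+1) ≤ 1/(m+1) := by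
    apply one_div_le_one_div_of_le (by positivity)
    have : (m:ℝ) ≤ n := Nat.cast_le.mpr hmn
    linarith
  linarith

lemma Iio_mono {ν₁ ν₂ : Measure ℝ} (h : ∀ t, ν₂ (Iic t) ≤ ν₁ (Iic t)) (s : ℝ) :
    ν₂ (Iio s) ≤ ν₁ (Iio s) := by
  rw [meas_Iio, meas_Iio]
  exact iSup_mono fun n => h _

lemma meas_mono_Iio (ν : Measure ℝ) : Measurable (fun s : ℝ => ν (Iio s)) := by
  have hm : Monotone (fun s : ℝ => ν (Iio s)) := fun _ _ h => measure_mono (Iio_subset_Iio h)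
  exact hm.measurable

lemma meas_mono_Iic (ν : Measure ℝ) : Measurable (fun s : ℝ => ν (Iic s)) := by
  have hm : Monotone (fun s : ℝ => ν (Iic s)) := fun _ _ h => measure_mono (Iic_subset_Iic.2 h)
  exact hm.measurable

lemma prod_lt_eq (ν₁ ν₂ : Measure ℝ) [SFinite ν₂] :
    (ν₁.prod ν₂) {q : ℝ × ℝ | q.2 < q.1} = ∫⁻ s, ν₂ (Iio s) ∂ν₁ := by
  rw [Measure.prod_apply (measurableSet_lt measurable_snd measurable_fst)]
  have h : ∀ s : ℝ, Prod.mk s ⁻¹' {q : ℝ × ℝ | q.2 < q.1} = Iio s := by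
    intro s; ext t; simp
  simp_rw [h]

lemma prod_eq_eq (ν₁ ν₂ : Measure ℝ) [SFinite ν₂] :
    (ν₁.prod ν₂) {q : ℝ × ℝ | q.1 = q.2} = ∫⁻ s, ν₂ {s} ∂ν₁ := by
  rw [Measure.prod_apply (measurableSet_eq_fun measurable_fst measurable_snd)]
  have h : ∀ s : ℝ, Prod.mk s ⁻¹' {q : ℝ × ℝ | q.1 = q.2} = {s} := by
    intro s; ext t; simp [eq_comm]
  simp_rw [h]

lemma Iic_split (ν : Measure ℝ) (s : ℝ) : ν (Iic s) = ν (Iio s) + ν {s} := by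
  rw [← Iio_union_right, measure_union (by simp) (measurableSet_singleton s)]

lemma F_eq (ν₁ ν₂ : Measure ℝ) [SFinite ν₂] :
    F ν₁ ν₂ = (ν₁.prod ν₂) {q : ℝ × ℝ | q.2 < q.1} +
      ((ν₁.prod ν₂) {q : ℝ × ℝ | q.2 < q.1} + (ν₁.prod ν₂) {q : ℝ × ℝ | q.1 = q.2}) := by
  rw [prod_lt_eq, prod_eq_eq, F]
  rw [lintegral_add_left (meas_mono_Iio ν₂)]
  congr 1
  simp_rw [Iic_split ν₂]
  rw [lintegral_add_left (meas_mono_Iio ν₂)]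

lemma F_ne_top (ν₁ ν₂ : Measure ℝ) [IsProbabilityMeasure ν₁] [IsProbabilityMeasure ν₂] :
    F ν₁ ν₂ ≠ ⊤ := by
  rw [F_eq]
  exact ENNReal.add_ne_top.2 ⟨measure_ne_top _ _,
    ENNReal.add_ne_top.2 ⟨measure_ne_top _ _, measure_ne_top _ _⟩⟩

lemma two_E (ν₁ ν₂ : Measure ℝ) [IsProbabilityMeasure ν₁] [IsProbabilityMeasure ν₂] :
    2 * E ν₁ ν₂ = (F ν₁ ν₂).toReal := by
  rw [F_eq, E, ENNReal.toReal_add (measure_ne_top _ _)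
    (ENNReal.add_ne_top.2 ⟨measure_ne_top _ _, measure_ne_top _ _⟩),
    ENNReal.toReal_add (measure_ne_top _ _) (measure_ne_top _ _)]
  ring

lemma E_add_E (ν₁ ν₂ : Measure ℝ) [IsProbabilityMeasure ν₁] [IsProbabilityMeasure ν₂] :
    E ν₁ ν₂ + E ν₂ ν₁ = 1 := by
  have hswap : ∀ S : Set (ℝ × ℝ), MeasurableSet S →
      (ν₂.prod ν₁) S = (ν₁.prod ν₂) (Prod.swap ⁻¹' S) := by
    intro S hS
    rw [← Measure.prod_swap, Measure.map_apply measurable_swap hS]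
  have h1 : (ν₂.prod ν₁) {q : ℝ × ℝ | q.2 < q.1} = (ν₁.prod ν₂) {q : ℝ × ℝ | q.1 < q.2} := by
    rw [hswap _ (measurableSet_lt measurable_snd measurable_fst)]
    congr 1
  have h2 : (ν₂.prod ν₁) {q : ℝ × ℝ | q.1 = q.2} = (ν₁.prod ν₂) {q : ℝ × ℝ | q.1 = q.2} := by
    rw [hswap _ (measurableSet_eq_fun measurable_fst measurable_snd)]
    congr 1
    ext q
    simp [eq_comm]
  have hd12 : Disjoint {q : ℝ × ℝ | q.2 < q.1} {q : ℝ × ℝ | q.1 < q.2} := by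
    rw [Set.disjoint_left]
    intro q hq hq'
    simp only [mem_setOf_eq] at hq hq'
    exact lt_asymm hq hq'
  have hd3 : Disjoint ({q : ℝ × ℝ | q.2 < q.1} ∪ {q : ℝ × ℝ | q.1 < q.2})
      {q : ℝ × ℝ | q.1 = q.2} := by
    rw [Set.disjoint_left]
    rintro q (hq | hq) hq' <;> simp only [mem_setOf_eq] at hq hq'
    · exact absurd hq' (ne_of_gt hq)
    · exact absurd hq' (ne_of_lt hq)
  have huniv : ({q : ℝ × ℝ | q.2 < q.1} ∪ {q : ℝ × ℝ | q.1 < q.2}) ∪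
      {q : ℝ × ℝ | q.1 = q.2} = univ := by
    ext q
    simp only [mem_union, mem_setOf_eq, mem_univ, iff_true]
    rcases lt_trichotomy q.1 q.2 with h | h | h
    · exact Or.inl (Or.inr h)
    · exact Or.inr h
    · exact Or.inl (Or.inl h)
  have hpart : (ν₁.prod ν₂) {q : ℝ × ℝ | q.2 < q.1} + (ν₁.prod ν₂) {q : ℝ × ℝ | q.1 < q.2}
      + (ν₁.prod ν₂) {q : ℝ × ℝ | q.1 = q.2} = 1 := by
    rw [← measure_union hd12 (measurableSet_lt measurable_fst measurable_snd),
      ← measure_union hd3 (measurableSet_eq_fun measurable_fst measurable_snd), huniv,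
      measure_univ]
  have hreal : ((ν₁.prod ν₂) {q : ℝ × ℝ | q.2 < q.1}).toReal +
      ((ν₁.prod ν₂) {q : ℝ × ℝ | q.1 < q.2}).toReal +
      ((ν₁.prod ν₂) {q : ℝ × ℝ | q.1 = q.2}).toReal = 1 := by
    rw [← ENNReal.toReal_add (measure_ne_top _ _) (measure_ne_top _ _),
      ← ENNReal.toReal_add (ENNReal.add_ne_top.2 ⟨measure_ne_top _ _, measure_ne_top _ _⟩)
        (measure_ne_top _ _), hpart, ENNReal.toReal_one]
  simp only [E, h1, h2]
  linarith

lemma E_self (ν : Measure ℝ) [IsProbabilityMeasure ν] : E ν ν = 1/2 := by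
  have := E_add_E ν ν
  linarith

lemma E_mono_right {ν₁ ν₂ ν₃ : Measure ℝ} [IsProbabilityMeasure ν₁]
    [IsProbabilityMeasure ν₂] [IsProbabilityMeasure ν₃]
    (h : ∀ t, ν₃ (Iic t) ≤ ν₂ (Iic t)) : E ν₁ ν₃ ≤ E ν₁ ν₂ := by
  have hF : F ν₁ ν₃ ≤ F ν₁ ν₂ :=
    lintegral_mono fun s => add_le_add (Iio_mono h s) (h s)
  have h2 := two_E ν₁ ν₂
  have h3 := two_E ν₁ ν₃
  have h4 := ENNReal.toReal_mono (F_ne_top ν₁ ν₂) hF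
  linarith

lemma E_mono_left {ν₁ ν₂ ν₃ : Measure ℝ} [IsProbabilityMeasure ν₁]
    [IsProbabilityMeasure ν₂] [IsProbabilityMeasure ν₃]
    (h : ∀ t, ν₁ (Iic t) ≤ ν₂ (Iic t)) : E ν₂ ν₃ ≤ E ν₁ ν₃ := by
  have h1 := E_add_E ν₂ ν₃
  have h2 := E_add_E ν₁ ν₃
  have h3 : E ν₃ ν₁ ≤ E ν₃ ν₂ := E_mono_right h
  linarith

lemma eq_of_half_le {ν₁ ν₂ : Measure ℝ} [IsProbabilityMeasure ν₁] [IsProbabilityMeasure ν₂]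
    (hle : ∀ t, ν₂ (Iic t) ≤ ν₁ (Iic t)) (hE : 1/2 ≤ E ν₁ ν₂) : ν₁ = ν₂ := by
  -- E ν₁ ν₂ = 1/2 and F ν₁ ν₂ = F ν₁ ν₁
  have hEle : E ν₁ ν₂ ≤ E ν₁ ν₁ := E_mono_right hle
  have hEself := E_self ν₁
  have hEeq : E ν₁ ν₂ = 1/2 := le_antisymm (by linarith) hE
  have h2a := two_E ν₁ ν₂
  have h2b := two_E ν₁ ν₁
  have hFF : F ν₁ ν₂ = F ν₁ ν₁ := by
    refine (ENNReal.toReal_eq_toReal_iff' (F_ne_top _ _) (F_ne_top _ _)).mp ?_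
    rw [← h2a, ← h2b, hEeq, hEself]
  set g : ℝ → ℝ≥0∞ := fun s => ν₂ (Iio s) + ν₂ (Iic s) with hg
  set f : ℝ → ℝ≥0∞ := fun s => ν₁ (Iio s) + ν₁ (Iic s) with hf
  have hgf : ∀ s, g s ≤ f s := fun s => add_le_add (Iio_mono hle s) (hle s)
  have hgm : Measurable g := (meas_mono_Iio ν₂).add (meas_mono_Iic ν₂)
  have hfm : Measurable f := (meas_mono_Iio ν₁).add (meas_mono_Iic ν₁)
  have hgfin : ∫⁻ s, g s ∂ν₁ ≠ ⊤ := F_ne_top ν₁ ν₂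
  have hsub : ∫⁻ s, (f s - g s) ∂ν₁ = 0 := by
    rw [lintegral_sub hgm hgfin (Filter.Eventually.of_forall hgf)]
    have : ∫⁻ s, f s ∂ν₁ = ∫⁻ s, g s ∂ν₁ := hFF.symm
    rw [this, tsub_self]
  have hae : ∀ᵐ s ∂ν₁, f s - g s = 0 :=
    (lintegral_eq_zero_iff (hfm.sub hgm)).mp hsub
  have hN : ν₁ {s : ℝ | ¬ f s ≤ g s} = 0 := by
    have : ∀ᵐ s ∂ν₁, f s ≤ g s := hae.mono fun s hs => tsub_eq_zero_iff_le.mp hs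
    exact ae_iff.mp this
  have key : ∀ s₀ : ℝ, ν₁ (Iic s₀) ≤ ν₂ (Iic s₀) := by
    intro s₀
    by_contra hcon
    push_neg at hcon
    set c : ℝ≥0∞ := ν₂ (Iic s₀) with hc
    set L : Set ℝ := {t : ℝ | t ≤ s₀ ∧ ν₁ (Iic t) ≤ c} with hL
    have hLc : ν₁ L ≤ c := by
      rcases eq_empty_or_nonempty L with hLe | hLne
      · simp [hLe]
      · have hbdd : BddAbove L := ⟨s₀, fun t ht => ht.1⟩
        set m := sSup L with hm
        by_cases hmc : ν₁ (Iic m) ≤ c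
        · exact le_trans (measure_mono (fun t ht => le_csSup hbdd ht : L ⊆ Iic m)) hmc
        · have hLio : L ⊆ Iio m := by
            intro t ht
            rcases lt_or_eq_of_le (le_csSup hbdd ht) with h | h
            · exact h
            · exact absurd (show ν₁ (Iic m) ≤ c by rw [hm, ← h]; exact ht.2) hmc
          refine le_trans (measure_mono hLio) ?_
          rw [meas_Iio]
          refine iSup_le fun n => ?_
          have hlt : m - 1/(n+1) < m := sub_lt_self m (by positivity)
          obtain ⟨t, htL, hlt'⟩ := exists_lt_of_lt_csSup hLne hlt
          exact le_trans (measure_mono (Iic_subset_Iic.2 hlt'.le)) htL.2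
    have hsubset : Iic s₀ ⊆ L ∪ {s : ℝ | ¬ f s ≤ g s} := by
      intro t ht
      by_cases h : ν₁ (Iic t) ≤ c
      · exact Or.inl ⟨ht, h⟩
      · push_neg at h
        right
        simp only [mem_setOf_eq, not_le]
        have h1 : ν₂ (Iic t) ≤ c := measure_mono (Iic_subset_Iic.2 ht)
        exact ENNReal.add_lt_add_of_le_of_lt (measure_ne_top ν₂ _)
          (Iio_mono hle t) (lt_of_le_of_lt h1 h)
    have hfin : ν₁ (Iic s₀) ≤ c := by
      calc ν₁ (Iic s₀) ≤ ν₁ (L ∪ {s : ℝ | ¬ f s ≤ g s}) := measure_mono hsubset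
        _ ≤ ν₁ L + ν₁ {s : ℝ | ¬ f s ≤ g s} := measure_union_le _ _
        _ = ν₁ L := by rw [hN, add_zero]
        _ ≤ c := hLc
    exact absurd hfin (not_le.2 hcon)
  exact Measure.ext_of_Iic ν₁ ν₂ fun t => le_antisymm (key t) (hle t)

end SSTAux

/-- If probability measures `μ_1, …, μ_n` are nondecreasing in stochastic
order, then the football-model matrix
`p_{ij} = P(X_i > X_j) + (1/2) P(X_i = X_j)` satisfies strong stochastic
transitivity. -/
theorem stochastically_ordered_implies_SST (n : ℕ) (μ : Fin n → Measure ℝ)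
    (hprob : ∀ i, IsProbabilityMeasure (μ i))
    (hmono : ∀ i j : Fin n, i ≤ j → ∀ t : ℝ, (μ j) (Set.Iic t) ≤ (μ i) (Set.Iic t))
    (p : Fin n → Fin n → ℝ)
    (hp : ∀ i j, p i j =
      (((μ i).prod (μ j)) {q : ℝ × ℝ | q.2 < q.1}).toReal +
        (1 / 2) * (((μ i).prod (μ j)) {q : ℝ × ℝ | q.1 = q.2}).toReal) :
    ∀ i j k : Fin n, i ≠ j → j ≠ k → i ≠ k →
      1 / 2 ≤ p i j → 1 / 2 ≤ p j k → max (p i j) (p j k) ≤ p i k := by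
  intro i j k hij hjk hik h1 h2
  haveI := hprob i
  haveI := hprob j
  haveI := hprob k
  have hpE : ∀ a b : Fin n, p a b = SSTAux.E (μ a) (μ b) := by
    intro a b
    rw [hp a b]
    rfl
  rw [hpE i j] at h1
  rw [hpE j k] at h2
  rw [hpE i j, hpE j k, hpE i k]
  rcases lt_or_gt_of_ne hjk with hjk' | hjk'
  · have hμ : μ j = μ k := SSTAux.eq_of_half_le (fun t => hmono j k hjk'.le t) h2
    rw [← hμ, SSTAux.E_self]
    exact max_le le_rfl h1
  · apply max_le
    · exact SSTAux.E_mono_right (fun t => hmono k j hjk'.le t)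
    · rcases lt_or_gt_of_ne hij with hij' | hij'
      · have hμ : μ i = μ j := SSTAux.eq_of_half_le (fun t => hmono i j hij'.le t) h1
        rw [hμ]
      · exact SSTAux.E_mono_left (fun t => hmono j i hij'.le t)
end

section
/- Let M = (m_{ij}) be a doubly stochastic n×n real matrix and define, for i ≠ j, p_{ij} = ∑_{a > b} m_{ia} m_{jb} + (1/2) ∑_{a=1}^n m_{ia} m_{ja}. Then for every i, ∑_{j ≠ i} p_{ij} = ∑_{j=1}^n (j−1) m_{ij}; that is, the score of team i in the football model equals the barycenter (mean) of the measure μ_i = ∑_j m_{ij} δ_{j−1} encoded by the i-th row. -/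
open Finset

lemma card_filter_lt_fin (n : ℕ) (a : Fin n) :
    (Finset.univ.filter (fun b : Fin n => (b : ℕ) < (a : ℕ))).card = a := by
  have : Finset.univ.filter (fun b : Fin n => (b : ℕ) < (a : ℕ)) = Finset.Iio a := by
    ext b
    simp only [Finset.mem_filter, Finset.mem_univ, true_and, Finset.mem_Iio, Fin.lt_def]
  rw [this, Fin.card_Iio]

/-- In the football model encoded by a doubly stochastic matrix `M`, the score
of team `i` equals the barycenter of the measure `μ_i = ∑_j m_{ij} δ_{j-1}`
given by the `i`-th row. -/
theorem football_score_eq_barycenter (n : ℕ) (M : Fin n → Fin n → ℝ)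
    (hpos : ∀ i j, 0 ≤ M i j)
    (hrow : ∀ i, ∑ j, M i j = 1)
    (hcol : ∀ j, ∑ i, M i j = 1) :
    ∀ i : Fin n,
      ∑ j ∈ Finset.univ.filter (· ≠ i),
        ((∑ a : Fin n, ∑ b : Fin n, if (b : ℕ) < (a : ℕ) then M i a * M j b else 0) +
          (1 / 2) * ∑ a : Fin n, M i a * M j a) =
      ∑ j : Fin n, ((j : ℕ) : ℝ) * M i j := by
  intro i
  have hfilter : Finset.univ.filter (· ≠ i) = (Finset.univ : Finset (Fin n)).erase i := by
    ext j; simp [Finset.mem_erase, and_comm]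
  rw [hfilter, Finset.sum_erase_eq_sub (Finset.mem_univ i)]
  -- total sum over all j
  have htot : ∑ j : Fin n,
      ((∑ a : Fin n, ∑ b : Fin n, if (b : ℕ) < (a : ℕ) then M i a * M j b else 0) +
        (1 / 2) * ∑ a : Fin n, M i a * M j a)
      = (∑ j : Fin n, ((j : ℕ) : ℝ) * M i j) + 1 / 2 := by
    rw [Finset.sum_add_distrib]
    have h1 : ∑ j : Fin n, ∑ a : Fin n, ∑ b : Fin n,
        (if (b : ℕ) < (a : ℕ) then M i a * M j b else 0)
        = ∑ j : Fin n, ((j : ℕ) : ℝ) * M i j := by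
      rw [Finset.sum_comm]
      have hinner : ∀ a : Fin n,
          (∑ j : Fin n, ∑ b : Fin n, if (b : ℕ) < (a : ℕ) then M i a * M j b else 0)
          = ((a : ℕ) : ℝ) * M i a := by
        intro a
        rw [Finset.sum_comm]
        have : ∀ b : Fin n,
            (∑ j : Fin n, if (b : ℕ) < (a : ℕ) then M i a * M j b else 0)
            = if (b : ℕ) < (a : ℕ) then M i a else 0 := by
          intro b
          split
          · rw [← Finset.mul_sum, hcol b, mul_one]
          · simp
        rw [Finset.sum_congr rfl fun b _ => this b, Finset.sum_ite,
          Finset.sum_const, Finset.sum_const_zero, add_zero, nsmul_eq_mul,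
          card_filter_lt_fin]
      exact Finset.sum_congr rfl fun a _ => hinner a
    have h2 : ∑ j : Fin n, (1 / 2 : ℝ) * ∑ a : Fin n, M i a * M j a = 1 / 2 := by
      rw [← Finset.mul_sum, Finset.sum_comm]
      have : ∀ a : Fin n, ∑ j : Fin n, M i a * M j a = M i a := by
        intro a; rw [← Finset.mul_sum, hcol a, mul_one]
      rw [Finset.sum_congr rfl fun a _ => this a, hrow i, mul_one]
    rw [h1, h2]
  -- diagonal term
  have hii : ((∑ a : Fin n, ∑ b : Fin n, if (b : ℕ) < (a : ℕ) then M i a * M i b else 0) +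
      (1 / 2) * ∑ a : Fin n, M i a * M i a) = 1 / 2 := by
    have hsq : (∑ a : Fin n, ∑ b : Fin n, M i a * M i b) = 1 := by
      rw [← Finset.sum_mul_sum, hrow i, mul_one]
    have hsplit : ∀ a b : Fin n, M i a * M i b =
        (if (b : ℕ) < (a : ℕ) then M i a * M i b else 0) +
        (if (a : ℕ) < (b : ℕ) then M i a * M i b else 0) +
        (if (a : ℕ) = (b : ℕ) then M i a * M i b else 0) := by
      intro a b
      rcases lt_trichotomy (b : ℕ) (a : ℕ) with h | h | h
      · simp [h, Nat.lt_asymm h, (Nat.ne_of_lt h).symm]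
      · simp [h.symm, lt_irrefl]
      · simp [h, Nat.lt_asymm h, Nat.ne_of_lt h]
    have hswap : (∑ a : Fin n, ∑ b : Fin n, if (a : ℕ) < (b : ℕ) then M i a * M i b else 0)
        = ∑ a : Fin n, ∑ b : Fin n, if (b : ℕ) < (a : ℕ) then M i a * M i b else 0 := by
      rw [Finset.sum_comm]
      refine Finset.sum_congr rfl fun a _ => Finset.sum_congr rfl fun b _ => ?_
      split <;> ring
    have hdiag : (∑ a : Fin n, ∑ b : Fin n, if (a : ℕ) = (b : ℕ) then M i a * M i b else 0)
        = ∑ a : Fin n, M i a * M i a := by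
      refine Finset.sum_congr rfl fun a _ => ?_
      have : ∀ b : Fin n, (if (a : ℕ) = (b : ℕ) then M i a * M i b else 0)
          = if b = a then M i a * M i a else 0 := by
        intro b
        by_cases h : b = a
        · simp [h]
        · have : (a : ℕ) ≠ (b : ℕ) := fun hc => h (Fin.ext hc.symm)
          simp [h, this]
      rw [Finset.sum_congr rfl fun b _ => this b, Finset.sum_ite_eq' Finset.univ a,
        if_pos (Finset.mem_univ a)]
    have key : (2 : ℝ) * (∑ a : Fin n, ∑ b : Fin n, if (b : ℕ) < (a : ℕ) then M i a * M i b else 0)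
        + (∑ a : Fin n, M i a * M i a) = 1 := by
      rw [← hsq]
      conv_rhs => rw [Finset.sum_congr rfl fun a _ => Finset.sum_congr rfl fun b _ => hsplit a b]
      simp only [Finset.sum_add_distrib]
      rw [hswap, hdiag]; ring
    linarith [key]
  rw [htot, hii]
  ring
end

section
/- Let x ∈ ℝ^n be an irreducible score, i.e. x has nondecreasing coordinates, ∑_{i=1}^n x_i = n(n−1)/2, and ∑_{i=1}^k x_i > k(k−1)/2 for every 1 ≤ k < n. Then there exists a doubly stochastic n×n matrix M = (m_{ij}) with ∑_{j=1}^n (j−1) m_{ij} = x_i for every i and with m_{ij} > 0 for all i, j. -/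
open Finset

private lemma mono_of_succ {n : ℕ} {f : ℕ → ℝ} (h : ∀ i, i + 1 < n → f i ≤ f (i+1)) :
    ∀ i j, i ≤ j → j < n → f i ≤ f j := by
  intro i j hij hjn
  induction j with
  | zero => interval_cases i; exact le_rfl
  | succ m ih =>
    rcases Nat.lt_or_ge i (m+1) with h' | h'
    · exact le_trans (ih (Nat.lt_succ_iff.mp h') (by omega)) (h m hjn)
    · have : i = m + 1 := le_antisymm hij h'
      simp [this]

private lemma sum_merge {k n : ℕ} (hk : k + 1 ≤ n) (F G : ℕ → ℝ)
    (h1 : ∀ j < k, F j = G j) (h2 : F k + F (k+1) = G k)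
    (h3 : ∀ j, k + 1 ≤ j → j < n → F (j+1) = G j) :
    ∑ j ∈ range (n+1), F j = ∑ j ∈ range n, G j := by
  have e1 : ∑ j ∈ range (n+1), F j
      = ∑ j ∈ Ico 0 k, F j + (F k + F (k+1)) + ∑ j ∈ Ico (k+2) (n+1), F j := by
    rw [range_eq_Ico, ← Finset.sum_Ico_consecutive F (Nat.zero_le (k+2)) (by omega : k+2 ≤ n+1),
      ← Finset.sum_Ico_consecutive F (Nat.zero_le k) (by omega : k ≤ k+2)]
    have : ∑ j ∈ Ico k (k+2), F j = F k + F (k+1) := by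
      rw [show k + 2 = (k+1)+1 by ring, Finset.sum_Ico_succ_top (by omega),
        Finset.sum_Ico_succ_top (by omega), Finset.Ico_self, Finset.sum_empty]
      ring
    rw [this]
  have e2 : ∑ j ∈ range n, G j
      = ∑ j ∈ Ico 0 k, G j + G k + ∑ j ∈ Ico (k+1) n, G j := by
    rw [range_eq_Ico, ← Finset.sum_Ico_consecutive G (Nat.zero_le (k+1)) hk,
      ← Finset.sum_Ico_consecutive G (Nat.zero_le k) (by omega : k ≤ k+1),
      Finset.sum_Ico_succ_top (by omega : k ≤ k), Finset.Ico_self, Finset.sum_empty, zero_add]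
  have e3 : ∑ j ∈ Ico (k+2) (n+1), F j = ∑ j ∈ Ico (k+1) n, G j := by
    rw [Finset.sum_Ico_eq_sum_range, Finset.sum_Ico_eq_sum_range]
    have hn : n + 1 - (k+2) = n - (k+1) := by omega
    rw [hn]
    refine Finset.sum_congr rfl fun i hi => ?_
    rw [Finset.mem_range] at hi
    have := h3 (k+1+i) (by omega) (by omega)
    rw [show k+2+i = (k+1+i)+1 by ring, this]
  rw [e1, e2, e3, Finset.sum_congr rfl (fun j hj => h1 j (Finset.mem_Ico.mp hj).2), h2]

private lemma hlp : ∀ (n : ℕ) (x y : ℕ → ℝ),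
    (∀ i, i + 1 < n → x i ≤ x (i+1)) →
    (∀ i, i + 1 < n → y i ≤ y (i+1)) →
    (∀ k ≤ n, ∑ i ∈ range k, y i ≤ ∑ i ∈ range k, x i) →
    (∑ i ∈ range n, x i = ∑ i ∈ range n, y i) →
    ∃ D : ℕ → ℕ → ℝ,
      (∀ i j, 0 ≤ D i j) ∧
      (∀ i < n, ∑ j ∈ range n, D i j = 1) ∧
      (∀ j < n, ∑ i ∈ range n, D i j = 1) ∧
      (∀ i < n, ∑ j ∈ range n, D i j * y j = x i) := by
  intro n
  induction n with
  | zero =>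
    intro x y _ _ _ _
    exact ⟨fun _ _ => 0, fun _ _ => le_rfl, by omega, by omega, by omega⟩
  | succ n IH =>
    intro x y hx hy hmaj hsum
    rcases Nat.eq_zero_or_pos n with hn0 | hn1
    · subst hn0
      refine ⟨fun _ _ => 1, fun _ _ => zero_le_one, ?_, ?_, ?_⟩
      · intro i _; simp
      · intro j _; simp
      · intro i hi
        interval_cases i
        rw [show (0:ℕ)+1 = 1 from rfl] at hsum ⊢
        simp only [sum_range_one] at hsum ⊢
        rw [one_mul]
        exact hsum.symm
    -- main step, n ≥ 1, size n+1
    · have hxm := mono_of_succ hx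
      have hym := mono_of_succ hy
      have hy0x0 : y 0 ≤ x 0 := by
        have := hmaj 1 (by omega)
        simpa using this
      have hx0yn : x 0 ≤ y n := by
        have h1 : (n+1 : ℝ) * x 0 ≤ ∑ i ∈ range (n+1), x i := by
          calc (n+1 : ℝ) * x 0 = ∑ _i ∈ range (n+1), x 0 := by
                rw [Finset.sum_const, card_range]; push_cast; ring
            _ ≤ ∑ i ∈ range (n+1), x i :=
                Finset.sum_le_sum fun i hi => hxm 0 i (Nat.zero_le i) (Finset.mem_range.mp hi)
        have h2 : ∑ i ∈ range (n+1), y i ≤ (n+1 : ℝ) * y n := by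
          calc ∑ i ∈ range (n+1), y i ≤ ∑ _i ∈ range (n+1), y n :=
                Finset.sum_le_sum fun i hi => hym i n (by
                  have := Finset.mem_range.mp hi; omega) (by omega)
            _ = (n+1 : ℝ) * y n := by rw [Finset.sum_const, card_range]; push_cast; ring
        have hpos : (0:ℝ) < (n+1 : ℝ) := by positivity
        nlinarith [hsum]
      classical
      set k := Nat.findGreatest (fun j => y j ≤ x 0) (n-1) with hkdef
      have hkle : k ≤ n - 1 := Nat.findGreatest_le _
      have hk1n : k + 1 ≤ n := by omega
      have hyk : y k ≤ x 0 := by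
        rw [hkdef]; exact Nat.findGreatest_spec (P := fun j => y j ≤ x 0) (Nat.zero_le _) hy0x0
      have hyk1 : x 0 ≤ y (k+1) := by
        rcases Nat.lt_or_ge k (n-1) with h | h
        · have := Nat.findGreatest_is_greatest (by omega : k < k+1) (by omega : k + 1 ≤ n - 1)
          exact le_of_not_ge this
        · have hkn : k = n - 1 := le_antisymm hkle h
          have : k + 1 = n := by omega
          rw [this]; exact hx0yn
      have hykk1 : y k ≤ y (k+1) := hym k (k+1) (by omega) (by omega)
      -- transport coefficient
      set t : ℝ := if y k = y (k+1) then 1 else (y (k+1) - x 0) / (y (k+1) - y k) with htdef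
      have ht0 : 0 ≤ t := by
        rw [htdef]; split_ifs with h
        · norm_num
        · apply div_nonneg (by linarith) (by linarith)
      have ht1 : t ≤ 1 := by
        rw [htdef]; split_ifs with h
        · exact le_refl 1
        · have hlt : y k < y (k+1) := lt_of_le_of_ne hykk1 h
          rw [div_le_one (by linarith)]
          linarith
      have htx : t * y k + (1 - t) * y (k+1) = x 0 := by
        rw [htdef]; split_ifs with h
        · simp; linarith
        · have hne : y (k+1) - y k ≠ 0 := by
            intro h'; exact h (by linarith)
          field_simp
          ring
      -- merged vector
      have hmlb : y k ≤ y k + y (k+1) - x 0 := by linarith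
      have hmub : y k + y (k+1) - x 0 ≤ y (k+1) := by linarith
      set ty : ℕ → ℝ := fun j => if j < k then y j else if j = k then y k + y (k+1) - x 0 else y (j+1) with htydef
      set tx : ℕ → ℝ := fun i => x (i+1) with htxdef
      have hty_lt : ∀ j < k, ty j = y j := fun j hj => by simp [htydef, hj]
      have hty_k : ty k = y k + y (k+1) - x 0 := by simp [htydef]
      have hty_gt : ∀ j, k + 1 ≤ j → ty j = y (j+1) := by
        intro j hj
        simp only [htydef]
        rw [if_neg (by omega), if_neg (by omega)]
      have htx_eq : ∀ i, tx i = x (i+1) := fun i => by simp [htxdef]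
      have hty_sum : ∀ p, k + 1 ≤ p → ∑ j ∈ range p, ty j = ∑ j ∈ range (p+1), y j - x 0 := by
        intro p hp
        have hsm := sum_merge (k := k) (n := p) hp y (fun j => ty j + if j = k then x 0 else 0)
          (fun j hj => by beta_reduce; rw [hty_lt j hj, if_neg (Nat.ne_of_lt hj)]; ring)
          (by beta_reduce; rw [hty_k, if_pos rfl]; ring)
          (fun j hj1 hj2 => by beta_reduce; rw [hty_gt j hj1, if_neg (by omega : ¬ j = k)]; ring)
        rw [Finset.sum_add_distrib, Finset.sum_ite_eq' (range p) k (fun _ => x 0),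
          if_pos (Finset.mem_range.mpr (by omega : k < p))] at hsm
        linarith
      have htx_sum : ∀ p, ∑ j ∈ range p, tx j = ∑ j ∈ range (p+1), x j - x 0 := by
        intro p
        rw [Finset.sum_range_succ' x p]
        simp only [htxdef]
        ring
      have htx_mono : ∀ i, i + 1 < n → tx i ≤ tx (i+1) := by
        intro i hi
        rw [htx_eq, htx_eq]
        exact hx (i+1) (by omega)
      have hty_mono : ∀ i, i + 1 < n → ty i ≤ ty (i+1) := by
        intro i hi
        rcases lt_trichotomy (i+1) k with h | h | h
        · rw [hty_lt i (by omega), hty_lt (i+1) h]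
          exact hy i (by omega)
        · rw [hty_lt i (by omega), h, hty_k]
          exact le_trans (hym i k (by omega) (by omega)) (by linarith)
        · rcases Nat.eq_or_lt_of_le (by omega : k ≤ i) with h' | h'
          · rw [← h', hty_k, hty_gt (k+1) (by omega)]
            exact le_trans hmub (hym (k+1) (k+2) (by omega) (by omega))
          · rw [hty_gt i (by omega), hty_gt (i+1) (by omega)]
            exact hy (i+1) (by omega)
      have htmaj : ∀ p ≤ n, ∑ j ∈ range p, ty j ≤ ∑ j ∈ range p, tx j := by
        intro p hp
        rcases Nat.lt_or_ge p (k+1) with h | h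
        · apply Finset.sum_le_sum
          intro j hj
          have hjp := Finset.mem_range.mp hj
          rw [hty_lt j (by omega), htx_eq]
          exact le_trans (hym j k (by omega) (by omega))
            (le_trans hyk (hxm 0 (j+1) (by omega) (by omega)))
        · rw [hty_sum p h, htx_sum p]
          have := hmaj (p+1) (by omega)
          linarith
      have htsum : ∑ j ∈ range n, tx j = ∑ j ∈ range n, ty j := by
        rw [hty_sum n hk1n, htx_sum n, hsum]
      obtain ⟨D, hD0, hDrow, hDcol, hDmean⟩ := IH tx ty htx_mono hty_mono htmaj htsum
      set M : ℕ → ℕ → ℝ := fun i j =>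
        if i = 0 then (if j = k then t else if j = k+1 then 1 - t else 0)
        else if j < k then D (i-1) j
        else if j = k then (1 - t) * D (i-1) k
        else if j = k+1 then t * D (i-1) k
        else D (i-1) (j-1) with hMdef
      have hM0 : ∀ j, M 0 j = (if j = k then t else if j = k+1 then 1 - t else 0) := by
        intro j; simp [hMdef]
      have hMS : ∀ i j, M (i+1) j = (if j < k then D i j else if j = k then (1 - t) * D i k
          else if j = k+1 then t * D i k else D i (j-1)) := by
        intro i j; simp [hMdef]
      refine ⟨M, ?_, ?_, ?_, ?_⟩
      · -- nonneg
        intro i j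
        rw [hMdef]
        dsimp only
        split_ifs
        · exact ht0
        · linarith
        · exact le_refl 0
        · exact hD0 _ _
        · exact mul_nonneg (by linarith) (hD0 _ _)
        · exact mul_nonneg ht0 (hD0 _ _)
        · exact hD0 _ _
      · -- row sums
        intro i hi
        rcases i with _ | i'
        · have hsm := sum_merge hk1n (M 0) (fun j => if j = k then (1:ℝ) else 0)
            (fun j hj => by
              beta_reduce
              rw [hM0 j, if_neg (by omega : ¬ j = k), if_neg (by omega : ¬ j = k+1),
                if_neg (by omega : ¬ j = k)])
            (by
              beta_reduce
              rw [hM0 k, hM0 (k+1), if_pos rfl, if_neg (by omega : ¬ k+1 = k), if_pos rfl,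
                if_pos rfl]
              ring)
            (fun j hj1 hj2 => by
              beta_reduce
              rw [hM0 (j+1), if_neg (by omega : ¬ j+1 = k), if_neg (by omega : ¬ j+1 = k+1),
                if_neg (by omega : ¬ j = k)])
          beta_reduce at hsm
          rw [hsm, Finset.sum_ite_eq' (range n) k (fun _ => (1:ℝ)),
            if_pos (Finset.mem_range.mpr (by omega : k < n))]
        · have hi' : i' < n := by omega
          have hsm := sum_merge hk1n (M (i'+1)) (D i')
            (fun j hj => by beta_reduce; rw [hMS i' j, if_pos hj])
            (by
              beta_reduce
              rw [hMS i' k, hMS i' (k+1), if_neg (lt_irrefl k), if_pos rfl,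
                if_neg (by omega : ¬ k+1 < k), if_neg (by omega : ¬ k+1 = k), if_pos rfl]
              ring)
            (fun j hj1 hj2 => by
              beta_reduce
              rw [hMS i' (j+1), if_neg (by omega : ¬ j+1 < k), if_neg (by omega : ¬ j+1 = k),
                if_neg (by omega : ¬ j+1 = k+1), show j+1-1 = j from by omega])
          beta_reduce at hsm
          rw [hsm, hDrow i' hi']
      · -- col sums
        intro j hj
        rw [Finset.sum_range_succ' (fun i => M i j) n]
        rcases Nat.lt_or_ge j k with h | h
        · rw [Finset.sum_congr rfl (fun i _ => by rw [hMS i j, if_pos h]), hM0 j,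
            if_neg (by omega : ¬ j = k), if_neg (by omega : ¬ j = k+1), hDcol j (by omega)]
          ring
        · by_cases h1 : j = k
          · subst h1
            rw [Finset.sum_congr rfl (fun i _ => by
                rw [hMS i k, if_neg (lt_irrefl k), if_pos rfl]),
              ← Finset.mul_sum, hDcol k (by omega), hM0 k, if_pos rfl]
            ring
          · by_cases h2 : j = k+1
            · subst h2
              rw [Finset.sum_congr rfl (fun i _ => by
                  rw [hMS i (k+1), if_neg (by omega : ¬ k+1 < k), if_neg (by omega : ¬ k+1 = k),
                    if_pos rfl]),
                ← Finset.mul_sum, hDcol k (by omega), hM0 (k+1),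
                if_neg (by omega : ¬ k+1 = k), if_pos rfl]
              ring
            · rw [Finset.sum_congr rfl (fun i _ => by
                  rw [hMS i j, if_neg (by omega : ¬ j < k), if_neg h1, if_neg h2]),
                hM0 j, if_neg h1, if_neg h2, hDcol (j-1) (by omega)]
              ring
      · -- row means
        intro i hi
        rcases i with _ | i'
        · have hsm := sum_merge hk1n (fun j => M 0 j * y j) (fun j => if j = k then x 0 else 0)
            (fun j hj => by
              beta_reduce
              rw [hM0 j, if_neg (by omega : ¬ j = k), if_neg (by omega : ¬ j = k+1),
                if_neg (by omega : ¬ j = k)]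
              ring)
            (by
              beta_reduce
              rw [hM0 k, hM0 (k+1), if_pos rfl, if_neg (by omega : ¬ k+1 = k), if_pos rfl,
                if_pos rfl]
              linarith [htx])
            (fun j hj1 hj2 => by
              beta_reduce
              rw [hM0 (j+1), if_neg (by omega : ¬ j+1 = k), if_neg (by omega : ¬ j+1 = k+1),
                if_neg (by omega : ¬ j = k)]
              ring)
          beta_reduce at hsm
          rw [hsm, Finset.sum_ite_eq' (range n) k (fun _ => x 0),
            if_pos (Finset.mem_range.mpr (by omega : k < n))]
        · have hi' : i' < n := by omega
          have hsm := sum_merge hk1n (fun j => M (i'+1) j * y j) (fun j => D i' j * ty j)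
            (fun j hj => by beta_reduce; rw [hMS i' j, if_pos hj, hty_lt j hj])
            (by
              beta_reduce
              rw [hMS i' k, hMS i' (k+1), if_neg (lt_irrefl k), if_pos rfl,
                if_neg (by omega : ¬ k+1 < k), if_neg (by omega : ¬ k+1 = k), if_pos rfl, hty_k]
              linear_combination (-(D i' k)) * htx)
            (fun j hj1 hj2 => by
              beta_reduce
              rw [hMS i' (j+1), if_neg (by omega : ¬ j+1 < k), if_neg (by omega : ¬ j+1 = k),
                if_neg (by omega : ¬ j+1 = k+1), show j+1-1 = j from by omega,
                hty_gt j hj1])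
          beta_reduce at hsm
          rw [hsm, hDmean i' hi', htx_eq i']



private lemma gauss_sum (k : ℕ) : ∑ j ∈ range k, (j : ℝ) = (k : ℝ) * ((k:ℝ) - 1) / 2 := by
  induction k with
  | zero => simp
  | succ m ih => rw [Finset.sum_range_succ, ih]; push_cast; ring

/-- If `x` is an irreducible score, then `Θ_n(x)` contains a doubly stochastic
matrix with all entries strictly positive. -/
theorem exists_positive_matrix_of_irreducible_score (n : ℕ) (x : Fin n → ℝ)
    (hx : Monotone x)
    (hsum : ∑ i, x i = (n * (n - 1) / 2 : ℝ))
    (hirr : ∀ k : ℕ, 1 ≤ k → k < n →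
      (k * (k - 1) / 2 : ℝ) <
        ∑ i ∈ Finset.univ.filter (fun i : Fin n => (i : ℕ) < k), x i) :
    ∃ M : Fin n → Fin n → ℝ,
      (∀ i j, 0 < M i j) ∧
      (∀ i, ∑ j, M i j = 1) ∧
      (∀ j, ∑ i, M i j = 1) ∧
      (∀ i, ∑ j : Fin n, ((j : ℕ) : ℝ) * M i j = x i) := by
  rcases Nat.lt_or_ge n 2 with hn | hn
  · interval_cases n
    · exact ⟨fun _ _ => 1, fun i => i.elim0, fun i => i.elim0, fun i => i.elim0, fun i => i.elim0⟩
    · have hx0 : x 0 = 0 := by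
        rw [Fin.sum_univ_one] at hsum
        norm_num at hsum
        exact hsum
      refine ⟨fun _ _ => 1, fun i j => one_pos, ?_, ?_, ?_⟩
      · intro i; simp
      · intro j; simp
      · intro i
        rw [Fin.sum_univ_one, Subsingleton.elim i 0, hx0]
        norm_num
  · classical
    have hn0 : (0:ℝ) < (n:ℝ) := by positivity
    set X : ℕ → ℝ := fun i => if h : i < n then x ⟨i, h⟩ else 0 with hXdef
    have hXeq : ∀ i : Fin n, X (i : ℕ) = x i := by
      intro i; simp [hXdef, i.isLt]
    have hfilter : ∀ k, k ≤ n → ∑ i ∈ filter (fun i : Fin n => (i:ℕ) < k) univ, x i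
        = ∑ i ∈ range k, X i := by
      intro k hk
      rw [Finset.sum_filter]
      have h1 : ∀ i : Fin n, (if (i:ℕ) < k then x i else 0)
          = (fun m => if m < k then X m else 0) (i:ℕ) := by
        intro i; beta_reduce; rw [hXeq]
      rw [Finset.sum_congr rfl (fun i _ => h1 i),
        Fin.sum_univ_eq_sum_range (fun m => if m < k then X m else 0) n, ← Finset.sum_filter]
      have : filter (fun m => m < k) (range n) = range k := by
        ext m; simp only [Finset.mem_filter, Finset.mem_range]; omega
      rw [this]
    have hXn : ∑ i ∈ range n, X i = (n:ℝ) * ((n:ℝ) - 1) / 2 := by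
      rw [← hfilter n le_rfl, ← hsum]
      congr 1
      ext i
      simp [i.isLt]
    have hXk : ∀ k, 1 ≤ k → k < n → (k:ℝ) * ((k:ℝ) - 1) / 2 < ∑ i ∈ range k, X i := by
      intro k h1 h2
      rw [← hfilter k (le_of_lt h2)]
      exact hirr k h1 h2
    have hXmono : ∀ i, i + 1 < n → X i ≤ X (i+1) := by
      intro i hi
      simp only [hXdef]
      rw [dif_pos (by omega : i < n), dif_pos hi]
      exact hx (by simp [Fin.mk_le_mk])
    -- choose ε
    obtain ⟨ε, hε0, hε1, hεk⟩ : ∃ ε : ℝ, 0 < ε ∧ ε < 1 ∧ ∀ k, 1 ≤ k → k < n →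
        ε * ((k:ℝ) * ((n:ℝ)-1)/2 - (k:ℝ)*((k:ℝ)-1)/2)
          ≤ (∑ i ∈ range k, X i) - (k:ℝ)*((k:ℝ)-1)/2 := by
      set f : ℕ → ℝ := fun k => ((∑ i ∈ range k, X i) - (k:ℝ)*((k:ℝ)-1)/2)
        / ((k:ℝ) * ((n:ℝ)-1)/2 - (k:ℝ)*((k:ℝ)-1)/2 + 1) with hfdef
      have hA : ∀ k, 1 ≤ k → k < n →
          (0:ℝ) ≤ (k:ℝ) * ((n:ℝ)-1)/2 - (k:ℝ)*((k:ℝ)-1)/2 := by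
        intro k h1 h2
        have hkr : (k:ℝ) ≤ (n:ℝ) := by exact_mod_cast le_of_lt h2
        have hk0 : (0:ℝ) ≤ (k:ℝ) := by positivity
        nlinarith
      have hfpos : ∀ k, 1 ≤ k → k < n → 0 < f k := by
        intro k h1 h2
        have := hXk k h1 h2
        have := hA k h1 h2
        apply div_pos (by linarith) (by linarith)
      obtain ⟨k₀, hk₀mem, hk₀min⟩ := Finset.exists_min_image (Finset.Ico 1 n) f
        ⟨1, by simp only [Finset.mem_Ico]; omega⟩
      rw [Finset.mem_Ico] at hk₀mem
      refine ⟨min (f k₀) (1/2), lt_min (hfpos k₀ hk₀mem.1 hk₀mem.2) (by norm_num),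
        lt_of_le_of_lt (min_le_right _ _) (by norm_num), ?_⟩
      intro k h1 h2
      have hAk := hA k h1 h2
      have hnum := hXk k h1 h2
      have step1 : min (f k₀) (1/2) * ((k:ℝ) * ((n:ℝ)-1)/2 - (k:ℝ)*((k:ℝ)-1)/2)
          ≤ f k * ((k:ℝ) * ((n:ℝ)-1)/2 - (k:ℝ)*((k:ℝ)-1)/2) := by
        apply mul_le_mul_of_nonneg_right _ hAk
        exact le_trans (min_le_left _ _) (hk₀min k (Finset.mem_Ico.mpr ⟨h1, h2⟩))
      refine le_trans step1 ?_
      rw [hfdef]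
      beta_reduce
      rw [div_mul_eq_mul_div, div_le_iff₀ (by linarith)]
      nlinarith
    -- apply hlp
    set Z : ℕ → ℝ := fun i => (X i - ε * ((n:ℝ)-1)/2) / (1-ε) with hZdef
    have hZeq : ∀ i, (1-ε) * Z i = X i - ε * ((n:ℝ)-1)/2 := by
      intro i
      simp only [hZdef]
      rw [mul_comm, div_mul_cancel₀ _ (by linarith : (1:ℝ)-ε ≠ 0)]
    have hZsum : ∀ k, ∑ i ∈ range k, Z i
        = ((∑ i ∈ range k, X i) - (k:ℝ) * (ε * ((n:ℝ)-1)/2)) / (1-ε) := by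
      intro k
      simp only [hZdef]
      rw [← Finset.sum_div, Finset.sum_sub_distrib, Finset.sum_const, card_range,
        nsmul_eq_mul]
    have hZmono : ∀ i, i + 1 < n → Z i ≤ Z (i+1) := by
      intro i hi
      simp only [hZdef]
      apply div_le_div_of_nonneg_right ?_ (by linarith)
      · linarith [hXmono i hi]
    have hYmono : ∀ i : ℕ, i + 1 < n → ((i:ℝ)) ≤ ((i+1 : ℕ):ℝ) := by
      intro i _; push_cast; linarith
    have hmaj : ∀ k ≤ n, ∑ i ∈ range k, ((i:ℕ):ℝ) ≤ ∑ i ∈ range k, Z i := by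
      intro k hk
      rw [gauss_sum, hZsum, le_div_iff₀ (by linarith : (0:ℝ) < 1-ε)]
      rcases Nat.eq_zero_or_pos k with h0 | h1
      · subst h0; norm_num
      · rcases Nat.lt_or_ge k n with h2 | h2
        · have := hεk k h1 h2
          nlinarith
        · have hkn : k = n := le_antisymm hk h2
          subst hkn
          rw [hXn]
          have : (k:ℝ)*((k:ℝ)-1)/2*(1-ε) = (k:ℝ)*((k:ℝ)-1)/2 - (k:ℝ)*(ε*((k:ℝ)-1)/2) := by
            ring
          linarith
    have hsumeq : ∑ i ∈ range n, Z i = ∑ i ∈ range n, ((i:ℕ):ℝ) := by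
      rw [gauss_sum, hZsum, hXn, div_eq_iff (by linarith : (1:ℝ)-ε ≠ 0)]
      ring
    obtain ⟨D, hD0, hDrow, hDcol, hDmean⟩ := hlp n Z (fun j => ((j:ℕ):ℝ))
      hZmono hYmono hmaj hsumeq
    refine ⟨fun i j => (1-ε) * D (i:ℕ) (j:ℕ) + ε / n, ?_, ?_, ?_, ?_⟩
    · intro i j
      have := hD0 (i:ℕ) (j:ℕ)
      have : (0:ℝ) < ε / n := by positivity
      nlinarith [hD0 (i:ℕ) (j:ℕ), hε1]
    · intro i
      rw [Fin.sum_univ_eq_sum_range (fun j => (1-ε) * D (i:ℕ) j + ε / n) n,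
        Finset.sum_add_distrib, ← Finset.mul_sum, hDrow (i:ℕ) i.isLt,
        Finset.sum_const, card_range, nsmul_eq_mul]
      field_simp
      ring
    · intro j
      rw [Fin.sum_univ_eq_sum_range (fun i => (1-ε) * D i (j:ℕ) + ε / n) n,
        Finset.sum_add_distrib, ← Finset.mul_sum, hDcol (j:ℕ) j.isLt,
        Finset.sum_const, card_range, nsmul_eq_mul]
      field_simp
      ring
    · intro i
      rw [Fin.sum_univ_eq_sum_range (fun j => ((j:ℝ)) * ((1-ε) * D (i:ℕ) j + ε / n)) n]
      have expand : ∀ j, ((j:ℕ):ℝ) * ((1-ε) * D (i:ℕ) j + ε / n)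
          = (1-ε) * (D (i:ℕ) j * (j:ℝ)) + (ε/n) * (j:ℝ) := by
        intro j; ring
      rw [Finset.sum_congr rfl (fun j _ => expand j), Finset.sum_add_distrib,
        ← Finset.mul_sum, ← Finset.mul_sum, hDmean (i:ℕ) i.isLt, gauss_sum, ← hXeq i]
      rw [hZeq (i:ℕ)]
      have hεn : ε / (n:ℝ) * ((n:ℝ) * ((n:ℝ) - 1) / 2) = ε * ((n:ℝ) - 1) / 2 := by
        field_simp
      linarith
end
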